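/- arXiv:math/0307093 — 10 statements merged into one kernel-verified Lean document; each statement's English description precedes it below -/
import Mathlib

section
/- For n ≥ 1, p > 0, x ∈ ℝⁿ, λ > 0, the kernel k(x,λ;ξ,z) = (|ξ-x|/λ)^p |ξ^{x,λ}-z|^p - |ξ-z|^p is strictly positive whenever |ξ-x| > λ and |z-x| > λ, where ξ^{x,λ} = x + λ²(ξ-x)/|ξ-x|². -/
/-!
With `ξ*` the inversion of `ξ` in the sphere of radius `λ` about `x`, expanding the squared norms
gives the identity
`(|ξ - x| / λ)² |ξ* - z|² = |ξ - z|² + (|ξ - x|² - λ²)(|z - x|² - λ²) / λ²`.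
Both factors of the correction term are positive when `ξ` and `z` lie outside the sphere, so
`|ξ - z| < (|ξ - x| / λ) |ξ* - z|`, and raising to the power `p > 0` preserves this.
-/

open EuclideanGeometry

variable {V P : Type*} [NormedAddCommGroup V] [InnerProductSpace ℝ V] [MetricSpace P]
  [NormedAddTorsor V P]

theorem sq_dist_div_mul_dist_inversion {c ξ : P} (z : P) {R : ℝ} (hξ : ξ ≠ c) (hR : R ≠ 0) :
    (dist ξ c / R * dist (inversion c R ξ) z) ^ 2 =
      dist ξ z ^ 2 + (dist ξ c ^ 2 - R ^ 2) * (dist z c ^ 2 - R ^ 2) / R ^ 2 := by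
  have hu : ‖ξ -ᵥ c‖ ≠ 0 := by simpa [dist_eq_norm_vsub V] using hξ
  rw [dist_eq_norm_vsub V (inversion c R ξ), ← vsub_sub_vsub_cancel_right _ z c,
    inversion_vsub_center, dist_eq_norm_vsub V ξ z, ← vsub_sub_vsub_cancel_right ξ z c]
  simp only [dist_eq_norm_vsub V, mul_pow, norm_sub_sq_real, norm_smul, real_inner_smul_left,
    Real.norm_eq_abs, abs_sq]
  field_simp
  ring

theorem dist_lt_dist_div_mul_dist_inversion {c ξ z : P} {R : ℝ} (hR : 0 < R)
    (hξ : R < dist ξ c) (hz : R < dist z c) :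
    dist ξ z < dist ξ c / R * dist (inversion c R ξ) z := by
  have hξc : ξ ≠ c := dist_pos.1 (hR.trans hξ)
  refine lt_of_pow_lt_pow_left₀ 2 (by positivity) ?_
  rw [sq_dist_div_mul_dist_inversion z hξc hR.ne']
  have : 0 < (dist ξ c ^ 2 - R ^ 2) * (dist z c ^ 2 - R ^ 2) / R ^ 2 :=
    div_pos (mul_pos (sub_pos.2 (pow_lt_pow_left₀ hξ hR.le two_ne_zero))
      (sub_pos.2 (pow_lt_pow_left₀ hz hR.le two_ne_zero))) (by positivity)
  linarith

theorem kernel_k_pos_general (n : ℕ) (p : ℝ) (hp : 0 < p)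
    (x ξ z : EuclideanSpace ℝ (Fin n)) (lam : ℝ) (hlam : 0 < lam)
    (hξ : lam < ‖ξ - x‖) (hz : lam < ‖z - x‖) :
    0 < (‖ξ - x‖ / lam) ^ p *
        ‖(x + (lam ^ 2 / ‖ξ - x‖ ^ 2) • (ξ - x)) - z‖ ^ p - ‖ξ - z‖ ^ p := by
  have hinv : x + (lam ^ 2 / ‖ξ - x‖ ^ 2) • (ξ - x) = inversion x lam ξ := by
    rw [inversion, dist_eq_norm, div_pow, vadd_eq_add, vsub_eq_sub, add_comm]
  rw [hinv]
  simp only [← dist_eq_norm] at hξ hz ⊢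
  rw [← Real.mul_rpow (by positivity) dist_nonneg, sub_pos]
  exact Real.rpow_lt_rpow dist_nonneg (dist_lt_dist_div_mul_dist_inversion hlam hξ hz) hp

theorem kernel_k_pos (n : ℕ) (hn : 1 ≤ n) (p : ℝ) (hp : 0 < p)
    (x ξ z : EuclideanSpace ℝ (Fin n)) (lam : ℝ) (hlam : 0 < lam)
    (hξ : lam < ‖ξ - x‖) (hz : lam < ‖z - x‖) :
    0 < (‖ξ - x‖ / lam) ^ p *
        ‖(x + (lam ^ 2 / ‖ξ - x‖ ^ 2) • (ξ - x)) - z‖ ^ p - ‖ξ - z‖ ^ p :=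
  kernel_k_pos_general n p hp x ξ z lam hlam hξ hz
end

section
/- Let n ≥ 1, 0 < α < n, and let v : ℝⁿ → [0,∞) be measurable. For x ∈ ℝⁿ, λ > 0, define v_{x,λ}(ξ) = (λ/|ξ-x|)^{n-α} v(ξ^{x,λ}). Then for all ξ ≠ x, (λ/|ξ-x|)^{n-α} ∫_{|y-x| ≥ λ} v(y)^{(n+α)/(n-α)} |ξ^{x,λ} - y|^{α-n} dy = ∫_{|z-x| ≤ λ} v_{x,λ}(z)^{(n+α)/(n-α)} |ξ - z|^{α-n} dz. -/
/-!
Substitute `y = z^{x,λ}`: inversion in the sphere `|y - x| = λ` maps the punctured ball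
`0 < |z - x| ≤ λ` onto `|y - x| ≥ λ`, with Jacobian `(λ/|z - x|)^{2n}`, and it scales distances by
`|ξ^{x,λ} - z^{x,λ}| = (λ/|ξ - x|)(λ/|z - x|)|ξ - z|`. The prefactor `(λ/|ξ - x|)^{n-α}` cancels
the first factor raised to `α - n`, and since `2n + (α - n) = (n - α) · (n + α)/(n - α)` the remaining
powers of `λ/|z - x|` are exactly the Kelvin factor raised to `(n + α)/(n - α)`.
-/

open MeasureTheory Metric Module EuclideanGeometry
open scoped ENNReal

namespace EuclideanGeometry

variable {E : Type*} [NormedAddCommGroup E] [InnerProductSpace ℝ E]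

theorem inversion_eq_add_smul (c : E) (R : ℝ) (w : E) :
    inversion c R w = c + (R ^ 2 / ‖w - c‖ ^ 2) • (w - c) := by
  rw [inversion, dist_eq_norm, div_pow, vsub_eq_sub, vadd_eq_add, add_comm]

theorem image_inversion_closedBall_diff_center {c : E} {R : ℝ} (hR : 0 < R) :
    inversion c R '' (closedBall c R \ {c}) = (ball c R)ᶜ := by
  rw [(inversion_involutive c hR.ne').image_eq_preimage_symm]
  ext y
  rcases eq_or_ne y c with rfl | hy
  · simp [hR]
  have hdist : 0 < dist y c := dist_pos.2 hy
  simp only [Set.mem_preimage, Set.mem_sdiff, mem_closedBall, dist_inversion_center,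
    Set.mem_singleton_iff, inversion_eq_center hR.ne', hy, not_false_eq_true, and_true,
    Set.mem_compl_iff, mem_ball, not_lt, div_le_iff₀ hdist, sq]
  constructor <;> intro h <;> nlinarith

theorem abs_det_fderiv_inversion [FiniteDimensional ℝ E] (c : E) (R : ℝ) (z : E) :
    |((R / dist z c) ^ 2 • ((ℝ ∙ (z - c))ᗮ.reflection : E →L[ℝ] E)).det| =
      (R / dist z c) ^ (2 * finrank ℝ E) := by
  rw [ContinuousLinearMap.det, ContinuousLinearMap.toLinearMap_smul, LinearMap.det_smul]
  erw [Submodule.det_reflection]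
  rw [abs_mul, abs_pow, abs_neg_one_pow, mul_one, pow_mul, abs_of_nonneg (by positivity)]

theorem lintegral_compl_ball_eq_lintegral_inversion [FiniteDimensional ℝ E] [MeasurableSpace E]
    [BorelSpace E] (μ : Measure E) [μ.IsAddHaarMeasure] {c : E} {R : ℝ} (hR : 0 < R)
    (g : E → ℝ≥0∞) :
    ∫⁻ y in (ball c R)ᶜ, g y ∂μ = ∫⁻ z in closedBall c R \ {c},
      ENNReal.ofReal ((R / dist z c) ^ (2 * finrank ℝ E)) * g (inversion c R z) ∂μ := by
  rw [← image_inversion_closedBall_diff_center hR, lintegral_image_eq_lintegral_abs_det_fderiv_mul μ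
    (measurableSet_closedBall.diff (measurableSet_singleton c))
    (fun z hz => (hasFDerivAt_inversion (R := R) hz.2).hasFDerivWithinAt)
    (inversion_injective c hR.ne').injOn]
  simp only [abs_det_fderiv_inversion]

end EuclideanGeometry

theorem rpow_kelvin_weight_identity {m α a b r V : ℝ} (ha : 0 < a) (hb : 0 < b) (hr : 0 ≤ r)
    (hV : 0 ≤ V) (hmα : m ≠ α) :
    a ^ (m - α) * (b ^ (2 * m) * (V ^ ((m + α) / (m - α)) * (a * b * r) ^ (α - m))) =
      (b ^ (m - α) * V) ^ ((m + α) / (m - α)) * r ^ (α - m) := by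
  have hexp : (m - α) * ((m + α) / (m - α)) = 2 * m + (α - m) := by
    field_simp [sub_ne_zero.2 hmα]; ring
  rw [Real.mul_rpow (by positivity) hV, ← Real.rpow_mul hb.le, hexp, Real.rpow_add hb,
    Real.mul_rpow (by positivity) hr, Real.mul_rpow ha.le hb.le]
  have ha' : a ^ (m - α) * a ^ (α - m) = 1 := by
    rw [← Real.rpow_add ha]; simp
  linear_combination (b ^ (2 * m) * V ^ ((m + α) / (m - α)) * b ^ (α - m) * r ^ (α - m)) * ha'

theorem inversion_integral_identity_general (n : ℕ) (α : ℝ)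
    (hαn : α < n) (v : EuclideanSpace ℝ (Fin n) → ℝ)
    (hv0 : ∀ y, 0 ≤ v y) (x : EuclideanSpace ℝ (Fin n)) (lam : ℝ) (hlam : 0 < lam)
    (ξ : EuclideanSpace ℝ (Fin n)) (hξ : ξ ≠ x) :
    ENNReal.ofReal ((lam / ‖ξ - x‖) ^ ((n : ℝ) - α)) *
      ∫⁻ y in {y : EuclideanSpace ℝ (Fin n) | lam ≤ ‖y - x‖},
        ENNReal.ofReal (v y ^ (((n : ℝ) + α) / ((n : ℝ) - α)) *
          ‖(x + (lam ^ 2 / ‖ξ - x‖ ^ 2) • (ξ - x)) - y‖ ^ (α - (n : ℝ))) =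
    ∫⁻ z in {z : EuclideanSpace ℝ (Fin n) | ‖z - x‖ ≤ lam},
      ENNReal.ofReal
        (((lam / ‖z - x‖) ^ ((n : ℝ) - α) *
            v (x + (lam ^ 2 / ‖z - x‖ ^ 2) • (z - x))) ^ (((n : ℝ) + α) / ((n : ℝ) - α)) *
          ‖ξ - z‖ ^ (α - (n : ℝ))) := by
  -- the center is a null set only in positive dimension
  have : Nontrivial (EuclideanSpace ℝ (Fin n)) := nontrivial_of_ne ξ x hξ
  have hcompl : {y : EuclideanSpace ℝ (Fin n) | lam ≤ ‖y - x‖} = (ball x lam)ᶜ := by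
    ext; simp [dist_eq_norm]
  have hclosedBall : {z : EuclideanSpace ℝ (Fin n) | ‖z - x‖ ≤ lam} = closedBall x lam := by
    ext; simp [dist_eq_norm]
  have hpunctured : closedBall x lam \ ({x} : Set _) =ᵐ[volume] closedBall x lam :=
    sdiff_ae_eq_self.2 (measure_mono_null Set.inter_subset_right (measure_singleton x))
  simp only [← inversion_eq_add_smul]
  rw [hcompl, lintegral_compl_ball_eq_lintegral_inversion volume hlam, hclosedBall,
    ← setLIntegral_congr hpunctured, ← lintegral_const_mul' _ _ ENNReal.ofReal_ne_top]
  refine setLIntegral_congr_fun (measurableSet_closedBall.diff (measurableSet_singleton x)) ?_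
  rintro z ⟨-, hz⟩
  simp only [← dist_eq_norm]
  rw [dist_inversion_inversion hξ hz, ← ENNReal.ofReal_mul (by positivity),
    ← ENNReal.ofReal_mul (by positivity), finrank_euclideanSpace_fin, ← Real.rpow_natCast,
    sq, ← div_mul_div_comm]
  push_cast
  exact congrArg ENNReal.ofReal <| rpow_kelvin_weight_identity (div_pos hlam (dist_pos.2 hξ))
    (div_pos hlam (dist_pos.2 hz)) dist_nonneg (hv0 _) hαn.ne'

theorem inversion_integral_identity (n : ℕ) (hn : 1 ≤ n) (α : ℝ) (hα0 : 0 < α)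
    (hαn : α < n) (v : EuclideanSpace ℝ (Fin n) → ℝ) (hv : Measurable v)
    (hv0 : ∀ y, 0 ≤ v y) (x : EuclideanSpace ℝ (Fin n)) (lam : ℝ) (hlam : 0 < lam)
    (ξ : EuclideanSpace ℝ (Fin n)) (hξ : ξ ≠ x) :
    ENNReal.ofReal ((lam / ‖ξ - x‖) ^ ((n : ℝ) - α)) *
      ∫⁻ y in {y : EuclideanSpace ℝ (Fin n) | lam ≤ ‖y - x‖},
        ENNReal.ofReal (v y ^ (((n : ℝ) + α) / ((n : ℝ) - α)) *
          ‖(x + (lam ^ 2 / ‖ξ - x‖ ^ 2) • (ξ - x)) - y‖ ^ (α - (n : ℝ))) =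
    ∫⁻ z in {z : EuclideanSpace ℝ (Fin n) | ‖z - x‖ ≤ lam},
      ENNReal.ofReal
        (((lam / ‖z - x‖) ^ ((n : ℝ) - α) *
            v (x + (lam ^ 2 / ‖z - x‖ ^ 2) • (z - x))) ^ (((n : ℝ) + α) / ((n : ℝ) - α)) *
          ‖ξ - z‖ ^ (α - (n : ℝ))) :=
  inversion_integral_identity_general n α hαn v hv0 x lam hlam ξ hξ
end

section
/- Let n ≥ 1, 0 < α < n, and let u : ℝⁿ → (0,∞) be a measurable function satisfying u(x) = ∫_{ℝⁿ} u(y)^{(n+α)/(n-α)} |x-y|^{α-n} dy for all x. Then for every x ∈ ℝⁿ and λ > 0, the conformally transformed function u_{x,λ}(ξ) = (λ/|ξ-x|)^{n-α} u(x + λ²(ξ-x)/|ξ-x|²) satisfies the same equation: u_{x,λ}(ξ) = ∫_{ℝⁿ} u_{x,λ}(z)^{(n+α)/(n-α)} |ξ-z|^{α-n} dz for all ξ ≠ x. -/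
/-!
The map `ι ξ = x + λ² (ξ - x) / |ξ - x|²` is the inversion in the sphere of radius `λ` about `x`.
It is an involution of `ℝⁿ ∖ {x}` with Jacobian `(λ / |z - x|)^{2n}`, and it scales distances by
`|ι ξ - ι z| = λ² |ξ - z| / (|ξ - x| |z - x|)`. Substituting `y = ι z` in the equation for `u` at
the point `ι ξ`, these two factors combine with the weight `(λ / |ξ - x|)^{n - α}` into exactly
the weight `(λ / |z - x|)^{(n - α) p}` of `u_{x,λ}(z)^p`, where `p = (n + α) / (n - α)`.
-/

open MeasureTheory EuclideanGeometry Module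

section Inversion

variable {E : Type*} [NormedAddCommGroup E] [InnerProductSpace ℝ E]

theorem add_smul_sub_eq_inversion (c z : E) (R : ℝ) :
    c + (R ^ 2 / ‖z - c‖ ^ 2) • (z - c) = inversion c R z := by
  rw [inversion, vsub_eq_sub, vadd_eq_add, dist_eq_norm, div_pow, add_comm]

theorem image_inversion_compl_center (c : E) {R : ℝ} (hR : R ≠ 0) :
    inversion c R '' {c}ᶜ = {c}ᶜ := by
  rw [Set.image_compl_eq (inversion_bijective c hR), Set.image_singleton, inversion_self]

variable [FiniteDimensional ℝ E]

theorem abs_det_smul_reflection (r : ℝ) (K : Submodule ℝ E) :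
    |(r • (K.reflection : E →L[ℝ] E)).det| = |r| ^ finrank ℝ E := by
  rw [ContinuousLinearMap.det, ContinuousLinearMap.toLinearMap_smul, LinearMap.det_smul, abs_mul,
    abs_pow]
  erw [K.det_reflection]
  simp

theorem integral_comp_inversion [MeasurableSpace E] [BorelSpace E] [Nontrivial E]
    {F : Type*} [NormedAddCommGroup F] [NormedSpace ℝ F] (μ : Measure E) [μ.IsAddHaarMeasure]
    (c : E) {R : ℝ} (hR : R ≠ 0) (g : E → F) :
    ∫ y, g y ∂μ = ∫ z, (R / dist z c) ^ (2 * finrank ℝ E) • g (inversion c R z) ∂μ := by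
  have hs : MeasurableSet ({c}ᶜ : Set E) := (measurableSet_singleton c).compl
  calc ∫ y, g y ∂μ = ∫ y in inversion c R '' {c}ᶜ, g y ∂μ := by
        rw [image_inversion_compl_center c hR, restrict_compl_singleton]
    _ = ∫ z in {c}ᶜ, |((R / dist z c) ^ 2 • ((ℝ ∙ (z - c))ᗮ.reflection : E →L[ℝ] E)).det|
          • g (inversion c R z) ∂μ :=
        integral_image_eq_integral_abs_det_fderiv_smul μ hs
          (fun z hz ↦ (hasFDerivAt_inversion hz).hasFDerivWithinAt)
          (inversion_injective c hR).injOn g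
    _ = ∫ z, (R / dist z c) ^ (2 * finrank ℝ E) • g (inversion c R z) ∂μ := by
        simp only [abs_det_smul_reflection, abs_pow, sq_abs, ← pow_mul]
        rw [restrict_compl_singleton]

end Inversion

theorem rpow_kelvin_weight {ν α r s U t : ℝ} (hαν : α < ν) (hr : 0 < r) (hs : 0 < s)
    (hU : 0 ≤ U) (ht : 0 ≤ t) :
    r ^ (ν - α) * (s ^ (2 * ν) * (U ^ ((ν + α) / (ν - α)) * (r * s * t) ^ (α - ν))) =
      (s ^ (ν - α) * U) ^ ((ν + α) / (ν - α)) * t ^ (α - ν) := by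
  have hexp : (ν - α) * ((ν + α) / (ν - α)) = ν + α := by
    field_simp [(sub_pos.2 hαν).ne']
  have hr_cancel : r ^ (ν - α) * r ^ (α - ν) = 1 := by
    rw [← Real.rpow_add hr]; simp
  have hs_combine : s ^ (2 * ν) * s ^ (α - ν) = s ^ (ν + α) := by
    rw [← Real.rpow_add hs]; ring_nf
  rw [Real.mul_rpow (by positivity) ht, Real.mul_rpow hr.le hs.le,
    Real.mul_rpow (by positivity) hU, ← Real.rpow_mul hs.le, hexp, ← hs_combine]
  linear_combination (s ^ (2 * ν) * s ^ (α - ν) * U ^ ((ν + α) / (ν - α)) * t ^ (α - ν)) *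
    hr_cancel

theorem conformal_invariance_of_solution_general (n : ℕ) (α : ℝ)
    (hαn : α < n) (u : EuclideanSpace ℝ (Fin n) → ℝ)
    (hupos : ∀ x, 0 < u x)
    (heq : ∀ x, u x = ∫ y, u y ^ (((n : ℝ) + α) / ((n : ℝ) - α)) * ‖x - y‖ ^ (α - (n : ℝ))) :
    ∀ x : EuclideanSpace ℝ (Fin n), ∀ lam : ℝ, 0 < lam →
      ∀ ξ, ξ ≠ x →
        (lam / ‖ξ - x‖) ^ ((n : ℝ) - α) * u (x + (lam ^ 2 / ‖ξ - x‖ ^ 2) • (ξ - x)) =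
          ∫ z, ((lam / ‖z - x‖) ^ ((n : ℝ) - α) *
              u (x + (lam ^ 2 / ‖z - x‖ ^ 2) • (z - x))) ^ (((n : ℝ) + α) / ((n : ℝ) - α)) *
            ‖ξ - z‖ ^ (α - (n : ℝ)) := by
  intro x lam hlam ξ hξ
  have : Nontrivial (EuclideanSpace ℝ (Fin n)) := nontrivial_of_ne ξ x hξ
  simp_rw [add_smul_sub_eq_inversion, ← dist_eq_norm]
  rw [heq, integral_comp_inversion volume x hlam.ne', ← integral_const_mul]
  refine integral_congr_ae ?_
  filter_upwards [volume.ae_ne x] with z hz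
  rw [← dist_eq_norm, dist_inversion_inversion hξ hz, sq, ← div_mul_div_comm,
    finrank_euclideanSpace_fin, smul_eq_mul, ← Real.rpow_natCast, Nat.cast_mul, Nat.cast_ofNat]
  exact rpow_kelvin_weight hαn (div_pos hlam (dist_pos.2 hξ)) (div_pos hlam (dist_pos.2 hz))
    (hupos _).le dist_nonneg

theorem conformal_invariance_of_solution (n : ℕ) (hn : 1 ≤ n) (α : ℝ) (hα0 : 0 < α)
    (hαn : α < n) (u : EuclideanSpace ℝ (Fin n) → ℝ) (hu : Measurable u)
    (hupos : ∀ x, 0 < u x)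
    (heq : ∀ x, u x = ∫ y, u y ^ (((n : ℝ) + α) / ((n : ℝ) - α)) * ‖x - y‖ ^ (α - (n : ℝ))) :
    ∀ x : EuclideanSpace ℝ (Fin n), ∀ lam : ℝ, 0 < lam →
      ∀ ξ, ξ ≠ x →
        (lam / ‖ξ - x‖) ^ ((n : ℝ) - α) * u (x + (lam ^ 2 / ‖ξ - x‖ ^ 2) • (ξ - x)) =
          ∫ z, ((lam / ‖z - x‖) ^ ((n : ℝ) - α) *
              u (x + (lam ^ 2 / ‖z - x‖ ^ 2) • (z - x))) ^ (((n : ℝ) + α) / ((n : ℝ) - α)) *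
            ‖ξ - z‖ ^ (α - (n : ℝ)) :=
  conformal_invariance_of_solution_general n α hαn u hupos heq
end

section
/- Let n ≥ 1, 0 < α < n, and let u ∈ C¹(ℝⁿ) be positive with liminf_{|x|→∞} |x|^{n-α} u(x) > 0. Then for each x ∈ ℝⁿ there exists λ₀ > 0 such that for all 0 < λ < λ₀ and all y with |y - x| ≥ λ, one has (λ/|y-x|)^{n-α} u(x + λ²(y-x)/|y-x|²) ≤ u(y). -/
/-!
Write `β = n - α` and `y^{x,λ} = x + λ²(y - x)/|y - x|²`, so that `|y^{x,λ} - x| = λ²/|y - x| ≤ λ`.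
Near `x` the function `u` is `L`-Lipschitz, and with `t = λ/|y - x| ≤ 1` the Lipschitz bound
`u(y^{x,λ}) ≤ u(y) + 2L(1 - t)|y - x|` combined with `β t^β (1 - t) ≤ 1 - t^β` gives
`t^β u(y^{x,λ}) ≤ u(y)` as soon as `2L|y - x| ≤ β u(y)`, i.e. for `y` close to `x`.
Away from `x`, the liminf hypothesis and compactness bound `|y - x|^β u(y)` below by some `ε > 0`,
while `λ^β u(y^{x,λ}) ≤ ε` for small `λ` because `u` is bounded near `x`.
-/

open Filter Topology Metric Bornology
open scoped NNReal

-- The tangent line at `1` of the convex function `t ↦ t ^ (-β)` lies below it.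
theorem mul_rpow_mul_one_sub_le_one_sub_rpow {β t : ℝ} (hβ : 0 ≤ β) (ht0 : 0 < t) :
    β * t ^ β * (1 - t) ≤ 1 - t ^ β := by
  have hlog : 1 - t ≤ -Real.log t := by linarith [Real.log_le_sub_one_of_pos ht0]
  have hneg : 1 + β * (1 - t) ≤ t ^ (-β) := by
    rw [Real.rpow_def_of_pos ht0]
    nlinarith [Real.add_one_le_exp (Real.log t * -β)]
  have hmul : t ^ (-β) * t ^ β = 1 := by rw [← Real.rpow_add ht0, neg_add_cancel, Real.rpow_zero]
  nlinarith [Real.rpow_pos_of_pos ht0 β]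

theorem ContinuousAt.eventually_rpow_mul_le {X : Type*} [PseudoMetricSpace X] {u : X → ℝ}
    {x : X} {β ε : ℝ} (hu : ContinuousAt u x) (hβ : 0 < β) (hε : 0 < ε) :
    ∀ᶠ lam in 𝓝[>] 0, ∀ z ∈ closedBall x lam, lam ^ β * u z ≤ ε := by
  obtain ⟨δ, hδ, hδu⟩ :=
    Metric.eventually_nhds_iff.1 (hu.eventually (gt_mem_nhds (lt_add_one (u x))))
  have hpow : Tendsto (fun lam : ℝ => lam ^ β * (u x + 1)) (𝓝[>] 0) (𝓝 0) := by
    have := ((Real.continuousAt_rpow_const 0 β (Or.inr hβ.le)).mul_const (u x + 1)).tendsto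
    rw [Real.zero_rpow hβ.ne', zero_mul] at this
    exact this.mono_left nhdsWithin_le_nhds
  filter_upwards [self_mem_nhdsWithin, hpow.eventually (eventually_le_nhds hε),
    nhdsWithin_le_nhds (eventually_lt_nhds hδ)] with lam hlam hlamε hlamδ z hz
  calc lam ^ β * u z ≤ lam ^ β * (u x + 1) := by
        have : 0 ≤ lam ^ β := Real.rpow_nonneg (le_of_lt hlam) β
        gcongr
        exact (hδu ((mem_closedBall.1 hz).trans_lt hlamδ)).le
    _ ≤ ε := hlamε

theorem IsClosed.exists_pos_le_of_eventually_cocompact {X : Type*} [TopologicalSpace X]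
    {g : X → ℝ} {S : Set X} {l : ℝ} (hS : IsClosed S) (hg : ContinuousOn g S)
    (hpos : ∀ y ∈ S, 0 < g y) (hl : 0 < l) (hfar : ∀ᶠ y in cocompact X, l ≤ g y) :
    ∃ ε > 0, ∀ y ∈ S, ε ≤ g y := by
  obtain ⟨K, hK, hKc⟩ := mem_cocompact.1 hfar
  obtain ⟨m, hm, hmS⟩ := (hK.inter_left hS).exists_forall_le' (hg.mono Set.inter_subset_left)
    fun y hy => hpos y hy.1
  refine ⟨min m l, lt_min hm hl, fun y hy => ?_⟩
  by_cases hyK : y ∈ K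
  · exact (min_le_left _ _).trans (hmS y ⟨hy, hyK⟩)
  · exact (min_le_right _ _).trans (hKc hyK)

theorem exists_pos_eventually_le_norm_sub_rpow_mul {E : Type*} [SeminormedAddCommGroup E]
    {u : E → ℝ} {β : ℝ} (hu : ∀ y, 0 ≤ u y) (hβ : 0 ≤ β)
    (h : 0 < liminf (fun y => ‖y‖ ^ β * u y) (comap norm atTop)) (x : E) :
    ∃ l > 0, ∀ᶠ y in cobounded E, l ≤ ‖y - x‖ ^ β * u y := by
  set m := liminf (fun y => ‖y‖ ^ β * u y) (comap norm atTop)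
  have hbdd : IsBoundedUnder (· ≥ ·) (comap norm atTop) fun y : E => ‖y‖ ^ β * u y :=
    isBoundedUnder_of ⟨0, fun y => mul_nonneg (by positivity) (hu y)⟩
  have hev := (eventually_lt_of_lt_liminf (half_lt_self h) hbdd).filter_mono comap_norm_atTop.ge
  refine ⟨m / 2 / 2 ^ β, by positivity, ?_⟩
  filter_upwards [hev, eventually_cobounded_le_norm (2 * ‖x‖)] with y hym hyx
  have hhalf : ‖y‖ / 2 ≤ ‖y - x‖ := by linarith [norm_sub_norm_le y x]
  calc m / 2 / 2 ^ β ≤ ‖y‖ ^ β * u y / 2 ^ β := by gcongr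
    _ = (‖y‖ / 2) ^ β * u y := by rw [Real.div_rpow (norm_nonneg y) zero_le_two]; ring
    _ ≤ ‖y - x‖ ^ β * u y := by gcongr; exact hu y

section Kelvin

variable {E : Type*} [NormedAddCommGroup E] [NormedSpace ℝ E]

-- The paper's `u_{x,λ}`, with `β = n - α`.
noncomputable def kelvinTransform (β : ℝ) (u : E → ℝ) (x : E) (lam : ℝ) (y : E) : ℝ :=
  (lam / ‖y - x‖) ^ β * u (x + (lam ^ 2 / ‖y - x‖ ^ 2) • (y - x))

theorem kelvinTransform_le_of_lipschitzOnWith {u : E → ℝ} {s : Set E} {L : ℝ≥0} {β lam : ℝ}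
    {x y : E} (hβ : 0 < β) (hs : Convex ℝ s) (hu : LipschitzOnWith L u s) (hx : x ∈ s)
    (hy : y ∈ s) (hlam : 0 < lam) (hlamy : lam ≤ ‖y - x‖) (hLy : 2 * L * ‖y - x‖ ≤ β * u y) :
    kelvinTransform β u x lam y ≤ u y := by
  set r := ‖y - x‖
  have hr : 0 < r := hlam.trans_le hlamy
  set t := lam / r
  have ht0 : 0 < t := div_pos hlam hr
  have ht1 : t ≤ 1 := (div_le_one hr).2 hlamy
  have hp : x + t ^ 2 • (y - x) ∈ s :=
    hs.add_smul_sub_mem hx hy ⟨sq_nonneg t, pow_le_one₀ ht0.le ht1⟩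
  have hpy : dist (x + t ^ 2 • (y - x)) y = (1 - t ^ 2) * r := by
    rw [dist_eq_norm, show x + t ^ 2 • (y - x) - y = (1 - t ^ 2) • (x - y) by module,
      norm_smul, Real.norm_of_nonneg (by nlinarith), norm_sub_rev]
  have hup : u (x + t ^ 2 • (y - x)) ≤ u y + 2 * L * (1 - t) * r := by
    have hLip := (le_abs_self _).trans (hu.dist_le_mul _ hp y hy)
    rw [hpy] at hLip
    nlinarith [mul_nonneg (mul_nonneg (mul_nonneg L.coe_nonneg (sub_nonneg.2 ht1)) hr.le)
      (sub_nonneg.2 ht1)]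
  have hTβ : 0 ≤ t ^ β := Real.rpow_nonneg ht0.le β
  have huy : 0 ≤ u y :=
    nonneg_of_mul_nonneg_right ((by positivity : (0 : ℝ) ≤ 2 * L * r).trans hLy) hβ
  have hkey := mul_rpow_mul_one_sub_le_one_sub_rpow hβ.le ht0
  rw [kelvinTransform, ← div_pow]
  calc t ^ β * u (x + t ^ 2 • (y - x)) ≤ t ^ β * (u y + 2 * L * (1 - t) * r) := by gcongr
    _ ≤ t ^ β * u y + t ^ β * (1 - t) * (β * u y) := by
      nlinarith [mul_nonneg hTβ (sub_nonneg.2 ht1)]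
    _ ≤ u y := by nlinarith [mul_le_mul_of_nonneg_right hkey huy]

theorem ContDiffAt.eventually_kelvinTransform_le {u : E → ℝ} {x : E} {β : ℝ}
    (hu : ContDiffAt ℝ 1 u x) (hux : 0 < u x) (hβ : 0 < β) :
    ∀ᶠ y in 𝓝 x, ∀ lam, 0 < lam → lam ≤ ‖y - x‖ → kelvinTransform β u x lam y ≤ u y := by
  obtain ⟨L, t, ht, hLip⟩ := hu.exists_lipschitzOnWith
  have hsmall : ∀ᶠ y in 𝓝 x, 2 * L * ‖y - x‖ < β * u y :=
    ContinuousAt.eventually_lt (by fun_prop) (continuousAt_const.mul hu.continuousAt)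
      (by simpa using mul_pos hβ hux)
  obtain ⟨ε, hε, hball⟩ := Metric.mem_nhds_iff.1 (inter_mem ht hsmall)
  filter_upwards [ball_mem_nhds x hε] with y hy lam hlam hlamy
  exact kelvinTransform_le_of_lipschitzOnWith hβ (convex_ball x ε)
    (hLip.mono fun z hz => (hball hz).1) (mem_ball_self hε) hy hlam hlamy (hball hy).2.le

theorem kelvinTransform_le_of_forall_closedBall {u : E → ℝ} {x y : E} {β lam ε : ℝ}
    (hlam : 0 < lam) (hlamy : lam ≤ ‖y - x‖)
    (hball : ∀ z ∈ closedBall x lam, lam ^ β * u z ≤ ε) (hy : ε ≤ ‖y - x‖ ^ β * u y) :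
    kelvinTransform β u x lam y ≤ u y := by
  set r := ‖y - x‖
  have hr : 0 < r := hlam.trans_le hlamy
  have hp : x + (lam ^ 2 / r ^ 2) • (y - x) ∈ closedBall x lam := by
    rw [mem_closedBall, dist_eq_norm, add_sub_cancel_left, norm_smul,
      Real.norm_of_nonneg (by positivity)]
    calc lam ^ 2 / r ^ 2 * r = lam * (lam / r) := by field_simp
      _ ≤ lam * 1 := by gcongr; exact (div_le_one hr).2 hlamy
      _ = lam := mul_one lam
  rw [kelvinTransform, Real.div_rpow hlam.le hr.le, div_mul_eq_mul_div,
    div_le_iff₀ (Real.rpow_pos_of_pos hr β)]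
  linarith [hball _ hp]

end Kelvin

theorem moving_sphere_start_general (n : ℕ) (α : ℝ) (hαn : α < n)
    (u : EuclideanSpace ℝ (Fin n) → ℝ) (hu : ContDiff ℝ 1 u) (hupos : ∀ x, 0 < u x)
    (hliminf : 0 < liminf (fun x : EuclideanSpace ℝ (Fin n) => ‖x‖ ^ ((n : ℝ) - α) * u x)
        (comap (fun x : EuclideanSpace ℝ (Fin n) => ‖x‖) atTop)) :
    ∀ x : EuclideanSpace ℝ (Fin n), ∃ lam₀ > (0 : ℝ),
      ∀ lam : ℝ, 0 < lam → lam < lam₀ → ∀ y, lam ≤ ‖y - x‖ →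
        (lam / ‖y - x‖) ^ ((n : ℝ) - α) * u (x + (lam ^ 2 / ‖y - x‖ ^ 2) • (y - x)) ≤ u y := by
  intro x
  have hβ : 0 < (n : ℝ) - α := sub_pos.2 hαn
  obtain ⟨r₀, hr₀, hnear⟩ := Metric.eventually_nhds_iff.1
    (hu.contDiffAt.eventually_kelvinTransform_le (hupos x) hβ)
  obtain ⟨l, hl, hfar⟩ :=
    exists_pos_eventually_le_norm_sub_rpow_mul (fun y => (hupos y).le) hβ.le hliminf x
  have hclosed : IsClosed {y | r₀ ≤ ‖y - x‖} := isClosed_le continuous_const (by fun_prop)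
  obtain ⟨ε, hε, hε_le⟩ := hclosed.exists_pos_le_of_eventually_cocompact
    ((Continuous.rpow_const (by fun_prop) fun _ => Or.inr hβ.le).mul hu.continuous).continuousOn
    (fun y hy => mul_pos (Real.rpow_pos_of_pos (hr₀.trans_le hy) _) (hupos y)) hl
    (cobounded_eq_cocompact (α := EuclideanSpace ℝ (Fin n)) ▸ hfar)
  obtain ⟨lam₀, hlam₀, hsmall⟩ := mem_nhdsGT_iff_exists_Ioo_subset.1
    (hu.continuous.continuousAt.eventually_rpow_mul_le (x := x) hβ hε)
  refine ⟨lam₀, hlam₀, fun lam hlam hlamlt y hlamy => ?_⟩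
  rcases lt_or_ge ‖y - x‖ r₀ with hyr | hyr
  · exact hnear (by rwa [dist_eq_norm]) lam hlam hlamy
  · exact kelvinTransform_le_of_forall_closedBall hlam hlamy (hsmall ⟨hlam, hlamlt⟩) (hε_le y hyr)

theorem moving_sphere_start (n : ℕ) (hn : 1 ≤ n) (α : ℝ) (hα0 : 0 < α) (hαn : α < n)
    (u : EuclideanSpace ℝ (Fin n) → ℝ) (hu : ContDiff ℝ 1 u) (hupos : ∀ x, 0 < u x)
    (hliminf : 0 < liminf (fun x : EuclideanSpace ℝ (Fin n) => ‖x‖ ^ ((n : ℝ) - α) * u x)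
        (comap (fun x : EuclideanSpace ℝ (Fin n) => ‖x‖) atTop)) :
    ∀ x : EuclideanSpace ℝ (Fin n), ∃ lam₀ > (0 : ℝ),
      ∀ lam : ℝ, 0 < lam → lam < lam₀ → ∀ y, lam ≤ ‖y - x‖ →
        (lam / ‖y - x‖) ^ ((n : ℝ) - α) * u (x + (lam ^ 2 / ‖y - x‖ ^ 2) • (y - x)) ≤ u y :=
  moving_sphere_start_general n α hαn u hu hupos hliminf
end

section
/- Let n ≥ 1, p > 0, q > 0, and let u : ℝⁿ → [0,∞] be measurable with u(x) = ∫_{ℝⁿ} |x-y|^p u(y)^{-q} dy for all x ∈ ℝⁿ, and u not identically +∞. Then ∫_{ℝⁿ} (1 + |y|^p) u(y)^{-q} dy < ∞. -/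
/-!
Write `f = u ^ (-q)`. If `u` were infinite off a single point, then `f = 0` almost everywhere
and the equation would force `u ≡ 0`; so `u` is finite at two points `x₀ ≠ x₁`.
By the quasi-triangle inequality `|a - c|^p ≤ 2^p (|a - b|^p + |b - c|^p)`, the weight
`1 + |y|^p` is bounded by a constant multiple of `|x₀ - y|^p + |x₁ - y|^p`, whose integral
against `f` is `u x₀ + u x₁ < ∞`.
-/

open MeasureTheory
open scoped ENNReal

theorem ENNReal.ofReal_norm_sub_rpow_le {E : Type*} [SeminormedAddCommGroup E] {p : ℝ}
    (hp : 0 ≤ p) (x y z : E) :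
    ENNReal.ofReal ‖x - z‖ ^ p ≤
      2 ^ p * (ENNReal.ofReal ‖x - y‖ ^ p + ENNReal.ofReal ‖y - z‖ ^ p) :=
  calc ENNReal.ofReal ‖x - z‖ ^ p ≤ (ENNReal.ofReal ‖x - y‖ + ENNReal.ofReal ‖y - z‖) ^ p := by
        rw [← ENNReal.ofReal_add (norm_nonneg _) (norm_nonneg _)]
        gcongr
        exact norm_sub_le_norm_sub_add_norm_sub x y z
    _ ≤ _ := ENNReal.add_rpow_le_two_rpow_mul_rpow_add_rpow _ _ hp

theorem exists_one_add_rpow_norm_le {E : Type*} [NormedAddCommGroup E] {p : ℝ} (hp : 0 ≤ p)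
    {x₀ x₁ : E} (hx : x₀ ≠ x₁) :
    ∃ C ≠ ⊤, ∀ y, 1 + ENNReal.ofReal ‖y‖ ^ p ≤
      C * (ENNReal.ofReal ‖x₀ - y‖ ^ p + ENNReal.ofReal ‖x₁ - y‖ ^ p) := by
  set K := ENNReal.ofReal ‖x₀ - x₁‖ ^ p
  set M := 1 + 2 ^ p * ENNReal.ofReal ‖x₀‖ ^ p
  have hK0 : K ≠ 0 :=
    (ENNReal.rpow_pos (ENNReal.ofReal_pos.2 (norm_pos_iff.2 (sub_ne_zero.2 hx)))
      ENNReal.ofReal_ne_top).ne'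
  have hKtop : K ≠ ⊤ := by finiteness
  refine ⟨(M / K + 1) * 2 ^ p, by finiteness, fun y => ?_⟩
  set S := ENNReal.ofReal ‖x₀ - y‖ ^ p + ENNReal.ofReal ‖x₁ - y‖ ^ p
  have hKS : K ≤ 2 ^ p * S := by
    simpa only [norm_sub_rev y x₁] using ENNReal.ofReal_norm_sub_rpow_le hp x₀ y x₁
  have hy : ENNReal.ofReal ‖y‖ ^ p ≤
      2 ^ p * (ENNReal.ofReal ‖x₀‖ ^ p + ENNReal.ofReal ‖x₀ - y‖ ^ p) := by
    simpa using ENNReal.ofReal_norm_sub_rpow_le hp 0 x₀ y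
  calc 1 + ENNReal.ofReal ‖y‖ ^ p ≤ M + 2 ^ p * S := by
        grw [hy]
        rw [mul_add, ← add_assoc]
        gcongr
        exact le_self_add
    _ ≤ M / K * (2 ^ p * S) + 2 ^ p * S := by
        gcongr
        calc M = M / K * K := (ENNReal.div_mul_cancel hK0 hKtop).symm
          _ ≤ _ := by gcongr
    _ = (M / K + 1) * 2 ^ p * S := by ring

theorem lintegral_one_add_rpow_norm_mul_lt_top {E : Type*} [NormedAddCommGroup E]
    [MeasurableSpace E] [OpensMeasurableSpace E] (μ : Measure E) {p : ℝ} (hp : 0 ≤ p)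
    {f : E → ℝ≥0∞} (hf : Measurable f) {x₀ x₁ : E} (hx : x₀ ≠ x₁)
    (h₀ : ∫⁻ y, ENNReal.ofReal ‖x₀ - y‖ ^ p * f y ∂μ ≠ ⊤)
    (h₁ : ∫⁻ y, ENNReal.ofReal ‖x₁ - y‖ ^ p * f y ∂μ ≠ ⊤) :
    ∫⁻ y, (1 + ENNReal.ofReal ‖y‖ ^ p) * f y ∂μ < ⊤ := by
  obtain ⟨C, hC, hweight⟩ := exists_one_add_rpow_norm_le hp hx
  calc ∫⁻ y, (1 + ENNReal.ofReal ‖y‖ ^ p) * f y ∂μ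
      ≤ ∫⁻ y, C * (ENNReal.ofReal ‖x₀ - y‖ ^ p * f y + ENNReal.ofReal ‖x₁ - y‖ ^ p * f y) ∂μ :=
        lintegral_mono fun y => by
          rw [← add_mul, ← mul_assoc]
          gcongr
          exact hweight y
    _ = C * (∫⁻ y, ENNReal.ofReal ‖x₀ - y‖ ^ p * f y ∂μ
          + ∫⁻ y, ENNReal.ofReal ‖x₁ - y‖ ^ p * f y ∂μ) := by
        have hg₀ : Measurable fun y => ENNReal.ofReal ‖x₀ - y‖ ^ p * f y :=
          ((continuous_const.sub continuous_id).norm.measurable.ennreal_ofReal.pow_const p).mul hf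
        rw [lintegral_const_mul' _ _ hC, lintegral_add_left hg₀]
    _ < ⊤ := by finiteness

theorem exists_ne_ne_top_of_forall_eq_lintegral {X : Type*} [MeasurableSpace X] [Nontrivial X]
    {μ : Measure X} [NullSingletonClass μ] (K : X → X → ℝ≥0∞) {q : ℝ} (hq : 0 < q) {u : X → ℝ≥0∞}
    (heq : ∀ x, u x = ∫⁻ y, K x y * u y ^ (-q) ∂μ) (x₀ : X) :
    ∃ x₁ ≠ x₀, u x₁ ≠ ⊤ := by
  by_contra! hinf
  have hzero : ∀ᵐ y ∂μ, u y ^ (-q) = 0 := by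
    filter_upwards [measure_singleton x₀ |> compl_mem_ae_iff.2] with y hy
    rw [hinf y hy, ENNReal.top_rpow_of_neg (neg_neg_iff_pos.2 hq)]
  obtain ⟨x₁, hx₁⟩ := exists_ne x₀
  have : u x₁ = 0 := by
    rw [heq x₁]
    refine (lintegral_congr_ae ?_).trans lintegral_zero
    filter_upwards [hzero] with y hy
    simp [hy]
  exact ENNReal.top_ne_zero (hinf x₁ hx₁ ▸ this)

theorem weighted_integrability_general (n : ℕ) (hn : 1 ≤ n) (p q : ℝ) (hp : 0 < p) (hq : 0 < q)
    (u : EuclideanSpace ℝ (Fin n) → ℝ≥0∞) (hu : Measurable u)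
    (heq : ∀ x, u x = ∫⁻ y, (ENNReal.ofReal ‖x - y‖) ^ p * u y ^ (-q)) :
    (∫⁻ y, (1 + (ENNReal.ofReal ‖y‖) ^ p) * u y ^ (-q)) < ⊤ := by
  have : Nonempty (Fin n) := ⟨⟨0, hn⟩⟩
  obtain ⟨x₀, -, hx₀⟩ := exists_ne_ne_top_of_forall_eq_lintegral _ hq heq 0
  obtain ⟨x₁, hx₁, hx₁_ne_top⟩ := exists_ne_ne_top_of_forall_eq_lintegral _ hq heq x₀
  exact lintegral_one_add_rpow_norm_mul_lt_top volume hp.le (hu.pow_const _) hx₁.symm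
    (heq x₀ ▸ hx₀) (heq x₁ ▸ hx₁_ne_top)

theorem weighted_integrability (n : ℕ) (hn : 1 ≤ n) (p q : ℝ) (hp : 0 < p) (hq : 0 < q)
    (u : EuclideanSpace ℝ (Fin n) → ℝ≥0∞) (hu : Measurable u)
    (heq : ∀ x, u x = ∫⁻ y, (ENNReal.ofReal ‖x - y‖) ^ p * u y ^ (-q))
    (hne : ¬ ∀ x, u x = ⊤) :
    (∫⁻ y, (1 + (ENNReal.ofReal ‖y‖) ^ p) * u y ^ (-q)) < ⊤ :=
  weighted_integrability_general n hn p q hp hq u hu heq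
end

section
/- Let n ≥ 1, p > 0, q > 0, and let u be a measurable solution of u(x) = ∫_{ℝⁿ} |x-y|^p u(y)^{-q} dy that is finite somewhere. Then lim_{|x|→∞} |x|^{-p} u(x) = ∫_{ℝⁿ} u(y)^{-q} dy, which is a finite positive number. -/
/-!
Since `u(x) = ∫ |x - y|^p g(y) dy` with `g = u^{-q}` of positive mass, cutting out a small ball
around `x` bounds `u` below by a positive constant uniformly in `x`, so `g` is bounded. As
`1 + |y| ≤ (2 + |x₀|) max(1, |x₀ - y|)`, this bound and `u(x₀) < ∞` give
`∫ (1 + |y|)^p g(y) dy < ∞`. Finally `|x|^{-p} |x - y|^p → 1` pointwise and is dominated by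
`(1 + |y|)^p` for `|x| ≥ 1`, so dominated convergence gives `|x|^{-p} u(x) → ∫ g`.
-/

open MeasureTheory Filter Metric Set Topology
open scoped ENNReal

theorem exists_pos_measure_closedBall_lt {E : Type*} [MetricSpace E] [ProperSpace E]
    [MeasurableSpace E] [OpensMeasurableSpace E] (μ : Measure E) [IsFiniteMeasureOnCompacts μ]
    [NullSingletonClass μ] (x : E) {m : ℝ≥0∞} (hm : 0 < m) : ∃ ρ > 0, μ (closedBall x ρ) < m := by
  have hlim := tendsto_measure_cthickening_of_isCompact (μ := μ) (isCompact_singleton (x := x))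
  rw [measure_singleton] at hlim
  obtain ⟨ρ, hρm, hρ⟩ := (((hlim.mono_left (nhdsWithin_le_nhds (s := Ioi 0))).eventually_lt_const
    hm).and self_mem_nhdsWithin).exists
  exact ⟨ρ, hρ, by rwa [← cthickening_singleton x (le_of_lt hρ)]⟩

section NormedGroup

variable {E : Type*} [NormedAddCommGroup E]

theorem tendsto_norm_sub_div_norm_comap_norm_atTop (y : E) :
    Tendsto (fun x : E => ‖x - y‖ / ‖x‖) (comap norm atTop) (𝓝 1) := by
  have hnorm : Tendsto (norm : E → ℝ) (comap norm atTop) atTop := tendsto_comap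
  have hdev : Tendsto (fun x : E => ‖x - y‖ / ‖x‖ - 1) (comap norm atTop) (𝓝 0) := by
    refine squeeze_zero_norm' ?_ ((tendsto_const_nhds (x := ‖y‖)).div_atTop hnorm)
    filter_upwards [hnorm.eventually_gt_atTop 0] with x hx
    rw [div_sub_one hx.ne', norm_div, Real.norm_of_nonneg hx.le, Real.norm_eq_abs]
    gcongr
    simpa using abs_norm_sub_norm_le (x - y) x
  simpa using hdev.add_const 1

theorem ofReal_norm_rpow_neg_mul_ofReal_norm_sub_rpow {x : E} (hx : 0 < ‖x‖) (y : E) {p : ℝ}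
    (hp : 0 ≤ p) :
    ENNReal.ofReal ‖x‖ ^ (-p) * ENNReal.ofReal ‖x - y‖ ^ p =
      ENNReal.ofReal (‖x - y‖ / ‖x‖) ^ p := by
  rw [ENNReal.ofReal_div_of_pos hx, ENNReal.div_rpow_of_nonneg _ _ hp, ENNReal.rpow_neg,
    div_eq_mul_inv, mul_comm]

theorem norm_sub_div_norm_le_one_add_norm {x : E} (hx : 1 ≤ ‖x‖) (y : E) :
    ‖x - y‖ / ‖x‖ ≤ 1 + ‖y‖ := by
  rw [div_le_iff₀ (by linarith)]
  nlinarith [norm_sub_le x y, norm_nonneg y]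

variable [MeasurableSpace E] [OpensMeasurableSpace E]

theorem tendsto_rpow_neg_mul_lintegral_rpow_norm_sub_mul (μ : Measure E) {p : ℝ} (hp : 0 ≤ p)
    {g : E → ℝ≥0∞} (hg : AEMeasurable g μ)
    (hfin : ∫⁻ y, ENNReal.ofReal (1 + ‖y‖) ^ p * g y ∂μ ≠ ⊤) :
    Tendsto (fun x : E => ENNReal.ofReal ‖x‖ ^ (-p) *
        ∫⁻ y, ENNReal.ofReal ‖x - y‖ ^ p * g y ∂μ) (comap norm atTop) (𝓝 (∫⁻ y, g y ∂μ)) := by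
  have hnorm : Tendsto (norm : E → ℝ) (comap norm atTop) atTop := tendsto_comap
  have hkernel : ∀ x : E, AEMeasurable (fun y => ENNReal.ofReal ‖x - y‖ ^ p * g y) μ := fun x =>
    ((continuous_const.sub continuous_id).norm.measurable.ennreal_ofReal.pow_const p
      |>.aemeasurable).mul hg
  have hratio : ∀ᶠ x : E in comap norm atTop, ∀ y, ENNReal.ofReal ‖x‖ ^ (-p) *
      (ENNReal.ofReal ‖x - y‖ ^ p * g y) = ENNReal.ofReal (‖x - y‖ / ‖x‖) ^ p * g y := by
    filter_upwards [hnorm.eventually_gt_atTop 0] with x hx y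
    rw [← mul_assoc, ofReal_norm_rpow_neg_mul_ofReal_norm_sub_rpow hx y hp]
  have hconst : ∀ x : E, ENNReal.ofReal ‖x‖ ^ (-p) * ∫⁻ y, ENNReal.ofReal ‖x - y‖ ^ p * g y ∂μ =
      ∫⁻ y, ENNReal.ofReal ‖x‖ ^ (-p) * (ENNReal.ofReal ‖x - y‖ ^ p * g y) ∂μ := fun x =>
    (lintegral_const_mul'' _ (hkernel x)).symm
  simp_rw [hconst]
  refine tendsto_lintegral_filter_of_dominated_convergence' _
    (Eventually.of_forall fun x => (hkernel x).const_mul _) ?_ hfin (ae_of_all _ fun y => ?_)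
  · filter_upwards [hratio, hnorm.eventually_ge_atTop 1] with x hx hx1
    refine ae_of_all _ fun y => ?_
    rw [hx y]
    gcongr
    exact norm_sub_div_norm_le_one_add_norm hx1 y
  · have hlim : Tendsto (fun x : E => ENNReal.ofReal (‖x - y‖ / ‖x‖) ^ p * g y)
        (comap norm atTop) (𝓝 (g y)) := by
      have := ((ENNReal.continuous_rpow_const (y := p)).tendsto _).comp
        (ENNReal.tendsto_ofReal (tendsto_norm_sub_div_norm_comap_norm_atTop y))
      rw [ENNReal.ofReal_one, ENNReal.one_rpow] at this
      simpa using ENNReal.Tendsto.mul_const this (Or.inl one_ne_zero)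
    exact hlim.congr' (hratio.mono fun x hx => (hx y).symm)

theorem lintegral_one_add_norm_rpow_mul_ne_top [ProperSpace E] (μ : Measure E)
    [IsFiniteMeasureOnCompacts μ] {p : ℝ} (hp : 0 ≤ p) {g : E → ℝ≥0∞} {C : ℝ≥0∞} (hC : C ≠ ⊤)
    (hgC : ∀ y, g y ≤ C) (x₀ : E)
    (hx₀ : ∫⁻ y, ENNReal.ofReal ‖x₀ - y‖ ^ p * g y ∂μ ≠ ⊤) :
    ∫⁻ y, ENNReal.ofReal (1 + ‖y‖) ^ p * g y ∂μ ≠ ⊤ := by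
  set K := ENNReal.ofReal (2 + ‖x₀‖) ^ p
  have hK : K ≠ ⊤ := ENNReal.rpow_ne_top_of_nonneg hp ENNReal.ofReal_ne_top
  have hB : MeasurableSet (closedBall x₀ 1) := measurableSet_closedBall
  rw [← lintegral_add_compl _ hB]
  refine ENNReal.add_ne_top.2 ⟨?_, ?_⟩
  · have hnear : ∫⁻ y in closedBall x₀ 1, ENNReal.ofReal (1 + ‖y‖) ^ p * g y ∂μ ≤
        ∫⁻ _ in closedBall x₀ 1, K * C ∂μ := by
      refine setLIntegral_mono' hB fun y hy => mul_le_mul' ?_ (hgC y)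
      have : ‖x₀ - y‖ ≤ 1 := mem_closedBall_iff_norm'.1 hy
      refine ENNReal.rpow_le_rpow (ENNReal.ofReal_le_ofReal ?_) hp
      linarith [norm_le_norm_add_norm_sub x₀ y]
    refine ne_top_of_le_ne_top ?_ hnear
    rw [setLIntegral_const]
    exact ENNReal.mul_ne_top (ENNReal.mul_ne_top hK hC) measure_closedBall_lt_top.ne
  · have hfar : ∫⁻ y in (closedBall x₀ 1)ᶜ, ENNReal.ofReal (1 + ‖y‖) ^ p * g y ∂μ ≤
        ∫⁻ y, K * (ENNReal.ofReal ‖x₀ - y‖ ^ p * g y) ∂μ := by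
      refine (setLIntegral_mono' hB.compl fun y hy => ?_).trans (setLIntegral_le_lintegral _ _)
      have : 1 < ‖x₀ - y‖ := by simpa [dist_eq_norm'] using hy
      rw [← mul_assoc, ← ENNReal.mul_rpow_of_nonneg _ _ hp, ← ENNReal.ofReal_mul (by positivity)]
      gcongr
      nlinarith [norm_le_norm_add_norm_sub x₀ y, norm_nonneg x₀]
    rw [lintegral_const_mul' _ _ hK] at hfar
    exact ne_top_of_le_ne_top (ENNReal.mul_ne_top hK hx₀) hfar

end NormedGroup

theorem exists_pos_le_lintegral_rpow_norm_sub_mul {E : Type*} [NormedAddCommGroup E]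
    [NormedSpace ℝ E] [FiniteDimensional ℝ E] [Nontrivial E] [MeasurableSpace E] [BorelSpace E]
    (μ : Measure E) [μ.IsAddHaarMeasure] {p : ℝ} (hp : 0 ≤ p) {g : E → ℝ≥0∞}
    (hg : AEMeasurable g μ) (hg0 : ∫⁻ y, g y ∂μ ≠ 0) :
    ∃ c > 0, ∀ x, c ≤ ∫⁻ y, ENNReal.ofReal ‖x - y‖ ^ p * g y ∂μ := by
  -- Truncating `g` at `1` keeps its null set but bounds its mass on a ball by the ball's volume.
  set m := ∫⁻ y, min (g y) 1 ∂μ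
  have hm : 0 < m := by
    refine pos_iff_ne_zero.2 fun h => hg0 ?_
    rw [lintegral_eq_zero_iff' hg]
    filter_upwards [(lintegral_eq_zero_iff' (hg.min aemeasurable_const)).1 h] with y hy
    simpa using hy
  obtain ⟨ρ, hρ, hρm⟩ := exists_pos_measure_closedBall_lt μ 0 hm
  have hρp : ENNReal.ofReal ρ ^ p ≠ ⊤ := ENNReal.rpow_ne_top_of_nonneg hp ENNReal.ofReal_ne_top
  refine ⟨ENNReal.ofReal ρ ^ p * (m - μ (closedBall 0 ρ)),
    ENNReal.mul_pos (ENNReal.rpow_pos (ENNReal.ofReal_pos.2 hρ) ENNReal.ofReal_ne_top).ne'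
      (tsub_pos_of_lt hρm).ne', fun x => ?_⟩
  have hB : MeasurableSet (closedBall x ρ) := measurableSet_closedBall
  have hsplit : m ≤ μ (closedBall 0 ρ) + ∫⁻ y in (closedBall x ρ)ᶜ, min (g y) 1 ∂μ :=
    calc m = ∫⁻ y in closedBall x ρ, min (g y) 1 ∂μ + ∫⁻ y in (closedBall x ρ)ᶜ, min (g y) 1 ∂μ :=
          (lintegral_add_compl _ hB).symm
      _ ≤ ∫⁻ _ in closedBall x ρ, 1 ∂μ + ∫⁻ y in (closedBall x ρ)ᶜ, min (g y) 1 ∂μ := by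
          gcongr with y
          exact min_le_right _ _
      _ = μ (closedBall 0 ρ) + ∫⁻ y in (closedBall x ρ)ᶜ, min (g y) 1 ∂μ := by
          rw [setLIntegral_const, one_mul, Measure.addHaar_closedBall_center]
  calc ENNReal.ofReal ρ ^ p * (m - μ (closedBall 0 ρ))
      ≤ ENNReal.ofReal ρ ^ p * ∫⁻ y in (closedBall x ρ)ᶜ, min (g y) 1 ∂μ := by
        gcongr
        exact tsub_le_iff_left.2 hsplit
    _ = ∫⁻ y in (closedBall x ρ)ᶜ, ENNReal.ofReal ρ ^ p * min (g y) 1 ∂μ :=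
        (lintegral_const_mul' _ _ hρp).symm
    _ ≤ ∫⁻ y in (closedBall x ρ)ᶜ, ENNReal.ofReal ‖x - y‖ ^ p * g y ∂μ := by
        refine setLIntegral_mono' hB.compl fun y hy => mul_le_mul' ?_ (min_le_left _ _)
        have : ρ < ‖x - y‖ := by simpa [dist_eq_norm'] using hy
        gcongr
    _ ≤ ∫⁻ y, ENNReal.ofReal ‖x - y‖ ^ p * g y ∂μ := setLIntegral_le_lintegral _ _

theorem asymptotic_limit (n : ℕ) (hn : 1 ≤ n) (p q : ℝ) (hp : 0 < p) (hq : 0 < q)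
    (u : EuclideanSpace ℝ (Fin n) → ℝ≥0∞) (hu : Measurable u) (hupos : ∀ x, 0 < u x)
    (heq : ∀ x, u x = ∫⁻ y, (ENNReal.ofReal ‖x - y‖) ^ p * u y ^ (-q))
    (hfin : ∃ x, u x ≠ ⊤) :
    Tendsto (fun x : EuclideanSpace ℝ (Fin n) => (ENNReal.ofReal ‖x‖) ^ (-p) * u x)
        (comap (fun x : EuclideanSpace ℝ (Fin n) => ‖x‖) atTop)
        (nhds (∫⁻ y, u y ^ (-q))) ∧
      0 < (∫⁻ y, u y ^ (-q)) ∧ (∫⁻ y, u y ^ (-q)) < ⊤ := by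
  obtain ⟨x₀, hx₀⟩ := hfin
  have : Nonempty (Fin n) := ⟨⟨0, hn⟩⟩
  have hg : Measurable fun y => u y ^ (-q) := hu.pow_const _
  have hmass : ∫⁻ y, u y ^ (-q) ≠ 0 := fun h => (hupos x₀).ne' <| by
    rw [heq x₀, ← lintegral_zero]
    refine lintegral_congr_ae ?_
    filter_upwards [(lintegral_eq_zero_iff hg).1 h] with y hy
    simp [hy]
  obtain ⟨c, hc, hcu⟩ :=
    exists_pos_le_lintegral_rpow_norm_sub_mul volume hp.le hg.aemeasurable hmass
  have hgc : ∀ y, u y ^ (-q) ≤ c ^ (-q) := fun y => by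
    rw [ENNReal.rpow_neg, ENNReal.rpow_neg, heq y]
    exact ENNReal.inv_le_inv.2 (ENNReal.rpow_le_rpow (hcu y) hq.le)
  have hc' : c ^ (-q) ≠ ⊤ := by
    rw [ENNReal.rpow_neg]
    exact ENNReal.inv_ne_top.2 (ENNReal.rpow_pos_of_nonneg hc hq.le).ne'
  have hweighted := lintegral_one_add_norm_rpow_mul_ne_top volume hp.le hc' hgc x₀
    (by rwa [← heq x₀])
  refine ⟨(tendsto_rpow_neg_mul_lintegral_rpow_norm_sub_mul volume hp.le hg.aemeasurable
    hweighted).congr fun x => by rw [heq x], pos_iff_ne_zero.2 hmass, ?_⟩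
  refine (lintegral_mono fun y => le_mul_of_one_le_left' ?_).trans_lt hweighted.lt_top
  exact ENNReal.one_le_rpow (by simp [ENNReal.one_le_ofReal]) hp
end

section
/- Let n ≥ 1, p > 0, and let u ∈ C¹(ℝⁿ) be positive and satisfy u(x) ≤ C(1+|x|^p) and u(x) ≥ (1+|x|^p)/C for some C ≥ 1. Then for each x ∈ ℝⁿ there is λ₀ > 0 such that for all 0 < λ < λ₀ and |y-x| ≥ λ, (|y-x|/λ)^p u(x + λ²(y-x)/|y-x|²) ≥ u(y). -/
/-!
For small `λ` the reflected point `y^{x,λ}` lies in the unit ball around `x`, where `u ≥ m > 0`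
and `u` is `L`-Lipschitz. When `λ ≤ |y - x| ≤ 1`, passing from `y^{x,λ}` to `y` costs at most
`2L(|y - x| - λ)`, while by concavity of `t ↦ t^q`, `q = min p 1`, the factor gains
`((|y - x|/λ)^p - 1) m ≥ q m (|y - x| - λ) / λ^q`; so `2 L λ^q ≤ q m` suffices.
When `|y - x| ≥ 1` the growth bound gives `u(y) ≤ K |y - x|^p`, so `K λ^p ≤ m` suffices.
-/

open Metric Filter Topology NNReal

/-- The point `y^{x,λ}`, the reflection of `y` in the sphere of radius `λ` around `x`. -/
noncomputable def sphereInversion {E : Type*} [NormedAddCommGroup E] [NormedSpace ℝ E]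
    (x : E) (lam : ℝ) (y : E) : E :=
  x + (lam ^ 2 / ‖y - x‖ ^ 2) • (y - x)

/-- Concavity of `s ↦ s ^ q`: its tangent line at `t` lies above the graph at `s = 1`. -/
theorem mul_sub_one_mul_rpow_sub_one_le_rpow_sub_one {q t : ℝ} (hq0 : 0 ≤ q) (hq1 : q ≤ 1)
    (ht : 0 < t) : q * (t - 1) * t ^ (q - 1) ≤ t ^ q - 1 := by
  have bernoulli : (t⁻¹) ^ q ≤ 1 + q * (t⁻¹ - 1) := by
    simpa using rpow_one_add_le_one_add_mul_self (s := t⁻¹ - 1)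
      (by linarith [inv_pos.2 ht]) hq0 hq1
  rw [Real.inv_rpow ht.le, inv_le_iff_one_le_mul₀ (Real.rpow_pos_of_pos ht q)] at bernoulli
  have key : t ≤ t * t ^ q - q * (t - 1) * t ^ q := by
    calc t ≤ t * ((1 + q * (t⁻¹ - 1)) * t ^ q) := le_mul_of_one_le_right ht.le bernoulli
      _ = t * t ^ q - q * (t - 1) * t ^ q := by field_simp; ring
  rw [Real.rpow_sub_one ht.ne', mul_div_assoc', div_le_iff₀ ht]
  linarith

theorem mul_sub_div_rpow_le_rpow_div_sub_one {p q lam r : ℝ} (hq0 : 0 ≤ q) (hq1 : q ≤ 1)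
    (hqp : q ≤ p) (hlam : 0 < lam) (hr : lam ≤ r) (hr1 : r ≤ 1) :
    q * (r - lam) / lam ^ q ≤ (r / lam) ^ p - 1 := by
  have hr0 : 0 < r := hlam.trans_le hr
  have ht : 1 ≤ r / lam := (one_le_div hlam).2 hr
  have hlam_le : lam ^ (1 - q) ≤ (r / lam) ^ (q - 1) := by
    rw [← inv_div, Real.inv_rpow (by positivity), ← Real.rpow_neg (by positivity), neg_sub]
    exact Real.rpow_le_rpow hlam.le (le_div_self hlam.le hr0 hr1) (by linarith)
  calc q * (r - lam) / lam ^ q = q * (r / lam - 1) * lam ^ (1 - q) := by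
        rw [Real.rpow_sub hlam, Real.rpow_one]
        field_simp
    _ ≤ q * (r / lam - 1) * (r / lam) ^ (q - 1) := by gcongr
    _ ≤ (r / lam) ^ q - 1 :=
        mul_sub_one_mul_rpow_sub_one_le_rpow_sub_one hq0 hq1 (by linarith)
    _ ≤ (r / lam) ^ p - 1 := by gcongr

theorem eventually_mul_rpow_lt {p : ℝ} (hp : 0 < p) (a : ℝ) {c : ℝ} (hc : 0 < c) :
    ∀ᶠ lam in 𝓝 (0 : ℝ), a * lam ^ p < c := by
  have hlim : Tendsto (fun lam : ℝ => a * lam ^ p) (𝓝 0) (𝓝 0) := by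
    simpa [Real.zero_rpow hp.ne'] using
      ((Real.continuousAt_rpow_const 0 p (Or.inr hp.le)).tendsto).const_mul a
  exact hlim.eventually (gt_mem_nhds hc)

theorem exists_forall_le_mul_rpow_of_le_mul_one_add_rpow {E : Type*} [SeminormedAddCommGroup E]
    {u : E → ℝ} {C p : ℝ} (hp : 0 ≤ p)
    (hub : ∀ y, u y ≤ C * (1 + ‖y‖ ^ p)) (x : E) :
    ∃ K, ∀ y, 1 ≤ ‖y - x‖ → u y ≤ K * ‖y - x‖ ^ p := by
  refine ⟨max C 0 * (1 + (‖x‖ + 1) ^ p), fun y hy => ?_⟩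
  have hnorm : ‖y‖ ≤ (‖x‖ + 1) * ‖y - x‖ := by
    have := norm_le_norm_add_norm_sub' y x
    nlinarith [norm_nonneg x]
  have hpow : ‖y‖ ^ p ≤ (‖x‖ + 1) ^ p * ‖y - x‖ ^ p := by
    rw [← Real.mul_rpow (by positivity) (norm_nonneg _)]
    exact Real.rpow_le_rpow (norm_nonneg _) hnorm hp
  have hone : 1 ≤ ‖y - x‖ ^ p := Real.one_le_rpow hy hp
  calc u y ≤ C * (1 + ‖y‖ ^ p) := hub y
    _ ≤ max C 0 * (1 + ‖y‖ ^ p) := by gcongr; exact le_max_left C 0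
    _ ≤ max C 0 * ((1 + (‖x‖ + 1) ^ p) * ‖y - x‖ ^ p) := by gcongr; linarith
    _ = max C 0 * (1 + (‖x‖ + 1) ^ p) * ‖y - x‖ ^ p := by ring

section NormedSpace

variable {E : Type*} [NormedAddCommGroup E] [NormedSpace ℝ E]

theorem norm_sphereInversion_sub (x : E) (lam : ℝ) (y : E) :
    ‖sphereInversion x lam y - x‖ = lam ^ 2 / ‖y - x‖ := by
  rw [sphereInversion, add_sub_cancel_left, norm_smul, Real.norm_of_nonneg (by positivity)]
  rcases eq_or_ne ‖y - x‖ 0 with h | h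
  · simp [h]
  · field_simp

theorem norm_sub_sphereInversion {x y : E} {lam : ℝ} (hlam : 0 < lam) (hy : lam ≤ ‖y - x‖) :
    ‖y - sphereInversion x lam y‖ = ‖y - x‖ - lam ^ 2 / ‖y - x‖ := by
  have hr : 0 < ‖y - x‖ := hlam.trans_le hy
  have hsq : lam ^ 2 / ‖y - x‖ ^ 2 ≤ 1 :=
    (div_le_one (by positivity)).2 (pow_le_pow_left₀ hlam.le hy 2)
  have hsub : y - sphereInversion x lam y = (1 - lam ^ 2 / ‖y - x‖ ^ 2) • (y - x) := by
    rw [sphereInversion]; module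
  rw [hsub, norm_smul, Real.norm_of_nonneg (by linarith)]
  field_simp

theorem sphereInversion_mem_closedBall {x y : E} {lam : ℝ} (hlam : 0 < lam) (hlam1 : lam ≤ 1)
    (hy : lam ≤ ‖y - x‖) : sphereInversion x lam y ∈ closedBall x 1 := by
  have hr : 0 < ‖y - x‖ := hlam.trans_le hy
  have h : lam ^ 2 / ‖y - x‖ ≤ lam := by
    rw [div_le_iff₀ hr, sq]
    exact mul_le_mul_of_nonneg_left hy hlam.le
  rw [mem_closedBall, dist_eq_norm, norm_sphereInversion_sub]
  linarith

variable {u : E → ℝ} {x y : E} {m p lam : ℝ}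

theorem le_rpow_div_mul_sphereInversion_of_le_one {L : ℝ≥0} {q : ℝ}
    (hL : LipschitzOnWith L u (closedBall x 1)) (hm0 : 0 ≤ m)
    (hm : ∀ z ∈ closedBall x 1, m ≤ u z) (hq0 : 0 ≤ q) (hq1 : q ≤ 1) (hqp : q ≤ p)
    (hlam : 0 < lam) (hsmall : 2 * L * lam ^ q ≤ q * m) (hy : lam ≤ ‖y - x‖)
    (hy1 : ‖y - x‖ ≤ 1) :
    u y ≤ (‖y - x‖ / lam) ^ p * u (sphereInversion x lam y) := by
  set r := ‖y - x‖
  set z := sphereInversion x lam y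
  have hr : 0 < r := hlam.trans_le hy
  have hz : z ∈ closedBall x 1 := sphereInversion_mem_closedBall hlam (hy.trans hy1) hy
  have hlip : u y - u z ≤ L * (r - lam ^ 2 / r) := by
    have := hL.dist_le_mul y (mem_closedBall.2 (by rwa [dist_eq_norm])) z hz
    rw [Real.dist_eq, dist_eq_norm, norm_sub_sphereInversion hlam hy] at this
    exact (le_abs_self _).trans this
  have hshrink : r - lam ^ 2 / r ≤ 2 * (r - lam) := by
    rw [sub_le_iff_le_add, ← sub_le_iff_le_add', le_div_iff₀ hr]
    nlinarith
  have hgain := mul_sub_div_rpow_le_rpow_div_sub_one hq0 hq1 hqp hlam hy hy1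
  have hpow : 0 ≤ (r / lam) ^ p - 1 :=
    sub_nonneg.2 (Real.one_le_rpow ((one_le_div hlam).2 hy) (hq0.trans hqp))
  calc u y ≤ u z + L * (2 * (r - lam)) := by
        linarith [mul_le_mul_of_nonneg_left hshrink L.coe_nonneg]
    _ = u z + 2 * L * lam ^ q * ((r - lam) / lam ^ q) := by field_simp
    _ ≤ u z + q * m * ((r - lam) / lam ^ q) := by gcongr
    _ ≤ u z + m * ((r / lam) ^ p - 1) := by
        rw [mul_comm q m, mul_assoc, ← mul_div_assoc]
        gcongr
    _ ≤ u z + u z * ((r / lam) ^ p - 1) := by gcongr; exact hm z hz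
    _ = (r / lam) ^ p * u z := by ring

theorem le_rpow_div_mul_sphereInversion_of_one_le {K : ℝ}
    (hK : ∀ y, 1 ≤ ‖y - x‖ → u y ≤ K * ‖y - x‖ ^ p) (hm : ∀ z ∈ closedBall x 1, m ≤ u z)
    (hlam : 0 < lam) (hlam1 : lam ≤ 1) (hsmall : K * lam ^ p ≤ m) (hy : 1 ≤ ‖y - x‖) :
    u y ≤ (‖y - x‖ / lam) ^ p * u (sphereInversion x lam y) := by
  have hz := hm _ (sphereInversion_mem_closedBall hlam hlam1 (hlam1.trans hy))
  calc u y ≤ K * ‖y - x‖ ^ p := hK y hy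
    _ = (‖y - x‖ / lam) ^ p * (K * lam ^ p) := by
        rw [Real.div_rpow (by positivity) hlam.le]; field_simp
    _ ≤ (‖y - x‖ / lam) ^ p * u (sphereInversion x lam y) := by gcongr; linarith

end NormedSpace

theorem moving_sphere_start_negative_general (n : ℕ) (p : ℝ) (hp : 0 < p)
    (u : EuclideanSpace ℝ (Fin n) → ℝ) (hu : ContDiff ℝ 1 u) (hupos : ∀ x, 0 < u x)
    (C : ℝ)
    (hub : ∀ x, u x ≤ C * (1 + ‖x‖ ^ p)) :
    ∀ x : EuclideanSpace ℝ (Fin n), ∃ lam₀ > (0 : ℝ),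
      ∀ lam : ℝ, 0 < lam → lam < lam₀ → ∀ y, lam ≤ ‖y - x‖ →
        u y ≤ (‖y - x‖ / lam) ^ p * u (x + (lam ^ 2 / ‖y - x‖ ^ 2) • (y - x)) := by
  intro x
  obtain ⟨z₀, -, hmin⟩ := (isCompact_closedBall x 1).exists_isMinOn
    (nonempty_closedBall.2 zero_le_one) hu.continuous.continuousOn
  obtain ⟨L, hL⟩ := hu.locallyLipschitz.locallyLipschitzOn.exists_lipschitzOnWith_of_compact
    (isCompact_closedBall x 1)
  obtain ⟨K, hK⟩ := exists_forall_le_mul_rpow_of_le_mul_one_add_rpow hp.le hub x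
  have hm := hupos z₀
  have hq : 0 < min p 1 := lt_min hp one_pos
  have hsmall : ∀ᶠ lam in 𝓝 (0 : ℝ),
      lam < 1 ∧ K * lam ^ p < u z₀ ∧ 2 * L * lam ^ min p 1 < min p 1 * u z₀ :=
    (gt_mem_nhds one_pos).and ((eventually_mul_rpow_lt hp K hm).and
      (eventually_mul_rpow_lt hq _ (mul_pos hq hm)))
  obtain ⟨lam₀, hlam₀, hball⟩ := Metric.eventually_nhds_iff.1 hsmall
  refine ⟨lam₀, hlam₀, fun lam hlam hlt y hy => ?_⟩
  obtain ⟨hlam1, hKm, hLm⟩ := hball (by rwa [Real.dist_0_eq_abs, abs_of_pos hlam])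
  rcases le_total ‖y - x‖ 1 with hnear | hfar
  · exact le_rpow_div_mul_sphereInversion_of_le_one hL hm.le (fun z hz => hmin hz) hq.le
      (min_le_right p 1) (min_le_left p 1) hlam hLm.le hy hnear
  · exact le_rpow_div_mul_sphereInversion_of_one_le hK (fun z hz => hmin hz) hlam hlam1.le
      hKm.le hfar

theorem moving_sphere_start_negative (n : ℕ) (hn : 1 ≤ n) (p : ℝ) (hp : 0 < p)
    (u : EuclideanSpace ℝ (Fin n) → ℝ) (hu : ContDiff ℝ 1 u) (hupos : ∀ x, 0 < u x)
    (C : ℝ) (hC : 1 ≤ C)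
    (hub : ∀ x, u x ≤ C * (1 + ‖x‖ ^ p)) (hlb : ∀ x, (1 + ‖x‖ ^ p) / C ≤ u x) :
    ∀ x : EuclideanSpace ℝ (Fin n), ∃ lam₀ > (0 : ℝ),
      ∀ lam : ℝ, 0 < lam → lam < lam₀ → ∀ y, lam ≤ ‖y - x‖ →
        u y ≤ (‖y - x‖ / lam) ^ p * u (x + (lam ^ 2 / ‖y - x‖ ^ 2) • (y - x)) :=
  moving_sphere_start_negative_general n p hp u hu hupos C hub
end

section
/- Let n ≥ 1, 0 < α < n, λ̄ > 0. For λ̄ ≤ λ ≤ |y| ≤ λ̄ + 1 and λ̄ + 2 ≤ |z| ≤ λ̄ + 3, the kernel K(0,λ;y,z) = |y-z|^{α-n} - (λ/|y|)^{n-α}|y^λ - z|^{α-n} (with y^λ = λ²y/|y|²) vanishes at |y| = λ, and its radial derivative there satisfies ∇_y K(0,λ;y,z)·y |_{|y|=λ} = (n-α)|y-z|^{α-n-2}(|z|² - |y|²) > 0. -/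
/-!
Write `β = α - n`. When `‖y‖ = λ`, inversion in the sphere of radius `λ` sends `t • y` to
`t⁻¹ • y` and `λ / ‖t • y‖ = t⁻¹` for `t > 0`, so along the ray the kernel is
`f t - t ^ β * f t⁻¹` with `f s = ‖s • y - z‖ ^ β`. This vanishes at `t = 1` and has derivative
`2 f'(1) - β f(1)` there. Since `f'(1) = β ‖y - z‖ ^ (β - 2) ⟪y - z, y⟫`, expanding
`‖y - z‖ ^ 2` leaves `β ‖y - z‖ ^ (β - 2) (‖y‖ ^ 2 - ‖z‖ ^ 2)`.
-/

open Real InnerProductSpace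

variable {E : Type*}

theorem norm_div_norm_smul_rpow [NormedAddCommGroup E] [NormedSpace ℝ E] {y : E} (hy : y ≠ 0)
    {t : ℝ} (ht : 0 < t) (γ : ℝ) : (‖y‖ / ‖t • y‖) ^ γ = t ^ (-γ) := by
  rw [norm_smul, norm_of_nonneg ht.le, div_mul_cancel_right₀ (norm_ne_zero_iff.mpr hy),
    inv_rpow ht.le, rpow_neg ht.le]

theorem sq_norm_div_sq_norm_smul_smul [NormedAddCommGroup E] [NormedSpace ℝ E] (y : E) (t : ℝ) :
    (‖y‖ ^ 2 / ‖t • y‖ ^ 2) • (t • y) = t⁻¹ • y := by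
  rcases eq_or_ne y 0 with rfl | hy
  · simp
  rcases eq_or_ne t 0 with rfl | ht
  · simp
  rw [smul_smul, norm_smul, mul_pow, norm_eq_abs, sq_abs]
  congr 1
  field_simp

variable [NormedAddCommGroup E] [InnerProductSpace ℝ E]

theorem HasDerivAt.norm_rpow {f : ℝ → E} {f' : E} {x : ℝ} (hf : HasDerivAt f f' x)
    (hx : f x ≠ 0) (β : ℝ) :
    HasDerivAt (fun s => ‖f s‖ ^ β) (β * ‖f x‖ ^ (β - 2) * ⟪f x, f'⟫_ℝ) x := by
  have hsq : (fun s => ‖f s‖ ^ β) = fun s => (‖f s‖ ^ 2) ^ (β / 2) := by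
    ext s
    rw [rpow_div_two_eq_sqrt _ (sq_nonneg _), sqrt_sq (norm_nonneg _)]
  have hx' : ‖f x‖ ^ 2 ≠ 0 := pow_ne_zero 2 (norm_ne_zero_iff.mpr hx)
  rw [hsq]
  convert hf.norm_sq.rpow_const (p := β / 2) (Or.inl hx') using 1
  rw [← rpow_natCast, ← rpow_mul (norm_nonneg _)]
  push_cast
  ring_nf

theorem HasDerivAt.sub_rpow_mul_comp_inv {f : ℝ → ℝ} {d : ℝ} (hf : HasDerivAt f d 1) (β : ℝ) :
    HasDerivAt (fun t => f t - t ^ β * f t⁻¹) (2 * d - β * f 1) 1 := by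
  have hinv : HasDerivAt (fun t : ℝ => t⁻¹) (-1) 1 := by
    simpa using hasDerivAt_inv (one_ne_zero (α := ℝ))
  have hfinv : HasDerivAt (fun t => f t⁻¹) (-d) 1 := by
    have hf' : HasDerivAt f d (1 : ℝ)⁻¹ := by rwa [inv_one]
    exact (hf'.comp 1 hinv).congr_deriv (mul_neg_one d)
  have hpow : HasDerivAt (fun t : ℝ => t ^ β) β 1 := by
    simpa using hasDerivAt_rpow_const (x := 1) (p := β) (Or.inl one_ne_zero)
  refine (hf.sub (hpow.mul hfinv)).congr_deriv ?_
  rw [inv_one, one_rpow]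
  ring

theorem kernel_boundary_derivative_general (n : ℕ) (α : ℝ)
    (hαn : α < n) (lb lam : ℝ) (hlb : 0 < lb)
    (y z : EuclideanSpace ℝ (Fin n))
    (hlam : lb ≤ lam) (hy : ‖y‖ = lam) (hy1 : ‖y‖ ≤ lb + 1)
    (hz2 : lb + 2 ≤ ‖z‖) :
    (‖y - z‖ ^ (α - (n : ℝ)) -
        (lam / ‖y‖) ^ ((n : ℝ) - α) * ‖(lam ^ 2 / ‖y‖ ^ 2) • y - z‖ ^ (α - (n : ℝ)) = 0) ∧
    deriv (fun t : ℝ =>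
        ‖t • y - z‖ ^ (α - (n : ℝ)) -
          (lam / ‖t • y‖) ^ ((n : ℝ) - α) *
            ‖(lam ^ 2 / ‖t • y‖ ^ 2) • (t • y) - z‖ ^ (α - (n : ℝ))) 1 =
      ((n : ℝ) - α) * ‖y - z‖ ^ (α - (n : ℝ) - 2) * (‖z‖ ^ 2 - ‖y‖ ^ 2) ∧
    0 < ((n : ℝ) - α) * ‖y - z‖ ^ (α - (n : ℝ) - 2) * (‖z‖ ^ 2 - ‖y‖ ^ 2) := by
  subst hy
  have hy0 : y ≠ 0 := norm_pos_iff.mp (by linarith)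
  have hyz_lt : ‖y‖ < ‖z‖ := by linarith
  have hyz : y - z ≠ 0 := fun h => hyz_lt.ne (by rw [sub_eq_zero.mp h])
  set β := α - (n : ℝ)
  set f := fun s : ℝ => ‖s • y - z‖ ^ β
  have hf : HasDerivAt f (β * ‖y - z‖ ^ (β - 2) * ⟪y - z, y⟫_ℝ) 1 := by
    simpa using ((hasDerivAt_id (1 : ℝ)).smul_const y |>.sub_const z).norm_rpow (by simpa) β
  have hray : (fun t : ℝ => ‖t • y - z‖ ^ β - (‖y‖ / ‖t • y‖) ^ ((n : ℝ) - α) *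
      ‖(‖y‖ ^ 2 / ‖t • y‖ ^ 2) • (t • y) - z‖ ^ β) =ᶠ[nhds 1] fun t => f t - t ^ β * f t⁻¹ := by
    filter_upwards [Ioi_mem_nhds one_pos] with t ht
    rw [norm_div_norm_smul_rpow hy0 ht, sq_norm_div_sq_norm_smul_smul, neg_sub]
  refine ⟨?_, ?_, ?_⟩
  · rw [div_self (norm_ne_zero_iff.mpr hy0), div_self (by positivity), one_smul, one_rpow,
      one_mul, sub_self]
  · rw [hray.deriv_eq, (hf.sub_rpow_mul_comp_inv β).deriv]
    have hf1 : f 1 = ‖y - z‖ ^ (β - 2) * ‖y - z‖ ^ 2 := by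
      rw [← rpow_natCast, ← rpow_add (norm_pos_iff.mpr hyz)]
      simp [f]
    rw [hf1, norm_sub_sq_real, inner_sub_left, real_inner_self_eq_norm_sq, real_inner_comm]
    ring
  · have : 0 < ‖y - z‖ := norm_pos_iff.mpr hyz
    have : ‖y‖ ^ 2 < ‖z‖ ^ 2 := by gcongr
    have : 0 < (n : ℝ) - α := by linarith
    positivity

theorem kernel_boundary_derivative (n : ℕ) (hn : 1 ≤ n) (α : ℝ) (hα0 : 0 < α)
    (hαn : α < n) (lb lam : ℝ) (hlb : 0 < lb)
    (y z : EuclideanSpace ℝ (Fin n))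
    (hlam : lb ≤ lam) (hy : ‖y‖ = lam) (hy1 : ‖y‖ ≤ lb + 1)
    (hz2 : lb + 2 ≤ ‖z‖) (hz3 : ‖z‖ ≤ lb + 3) :
    (‖y - z‖ ^ (α - (n : ℝ)) -
        (lam / ‖y‖) ^ ((n : ℝ) - α) * ‖(lam ^ 2 / ‖y‖ ^ 2) • y - z‖ ^ (α - (n : ℝ)) = 0) ∧
    deriv (fun t : ℝ =>
        ‖t • y - z‖ ^ (α - (n : ℝ)) -
          (lam / ‖t • y‖) ^ ((n : ℝ) - α) *
            ‖(lam ^ 2 / ‖t • y‖ ^ 2) • (t • y) - z‖ ^ (α - (n : ℝ))) 1 =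
      ((n : ℝ) - α) * ‖y - z‖ ^ (α - (n : ℝ) - 2) * (‖z‖ ^ 2 - ‖y‖ ^ 2) ∧
    0 < ((n : ℝ) - α) * ‖y - z‖ ^ (α - (n : ℝ) - 2) * (‖z‖ ^ 2 - ‖y‖ ^ 2) :=
  kernel_boundary_derivative_general n α hαn lb lam hlb y z hlam hy hy1 hz2
end

section
/- Let n ≥ 1, 0 < α < n, and let u ∈ L^{2n/(n-α)}_{loc}(ℝⁿ) be a positive function satisfying u(x) = ∫_{ℝⁿ} u(y)^{(n+α)/(n-α)} |x-y|^{α-n} dy for a.e. x. Then ∫_{|y|>2} u(y)^{(n+α)/(n-α)} |y|^{α-n} dy < ∞. -/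
/-!
Pick a point `x` of the unit ball at which the integral equation holds. Since `u x > 0`, the
integral defining `u x` is not Lean's junk value `0`, so with `p = (n + α) / (n - α)` the
function `y ↦ u y ^ p * ‖x - y‖ ^ (α - n)` is integrable. On `‖y‖ > 2` the norms `‖y‖` and
`‖x - y‖` agree up to a factor `2`, so the tail integrand is a bounded multiple of this
integrable function.
-/

open MeasureTheory Metric

lemma Real.rpow_le_two_rpow_abs {t : ℝ} (s : ℝ) (h₁ : 2⁻¹ ≤ t) (h₂ : t ≤ 2) :
    t ^ s ≤ 2 ^ |s| := by
  rcases le_or_gt 0 s with hs | hs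
  · rw [abs_of_nonneg hs]
    exact Real.rpow_le_rpow (by linarith) h₂ hs
  · calc t ^ s ≤ (2⁻¹ : ℝ) ^ s := Real.rpow_le_rpow_of_nonpos (by norm_num) h₁ hs.le
      _ = 2 ^ |s| := by rw [abs_of_neg hs, Real.inv_rpow zero_le_two, Real.rpow_neg zero_le_two]

lemma norm_div_norm_sub_mem_Icc {E : Type*} [SeminormedAddCommGroup E] {x y : E}
    (h : 2 * ‖x‖ < ‖y‖) : ‖y‖ / ‖x - y‖ ∈ Set.Icc 2⁻¹ 2 := by
  have hlow : ‖y‖ - ‖x‖ ≤ ‖x - y‖ := by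
    simpa [norm_sub_rev x y] using norm_sub_norm_le y x
  have hup : ‖x - y‖ ≤ ‖x‖ + ‖y‖ := norm_sub_le x y
  have hpos : 0 < ‖x - y‖ := by linarith [norm_nonneg x]
  constructor
  · rw [le_div_iff₀ hpos]; linarith
  · rw [div_le_iff₀ hpos]; linarith

theorem integrableOn_mul_norm_rpow_of_integrable_mul_norm_sub_rpow {E : Type*}
    [NormedAddCommGroup E] [MeasurableSpace E] [BorelSpace E] {μ : Measure E} {g : E → ℝ}
    {x : E} {s : Set E} (r : ℝ) (hs : MeasurableSet s) (hxs : ∀ y ∈ s, 2 * ‖x‖ < ‖y‖)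
    (hg : Integrable (fun y => g y * ‖x - y‖ ^ r) μ) :
    IntegrableOn (fun y => g y * ‖y‖ ^ r) s μ := by
  have hbdd : IntegrableOn (fun y => (‖y‖ / ‖x - y‖) ^ r * (g y * ‖x - y‖ ^ r)) s μ := by
    refine hg.integrableOn.bdd_mul (c := 2 ^ |r|) ?_ ?_
    · exact ((measurable_norm.div (continuous_const.sub continuous_id).norm.measurable).pow_const
        r).aestronglyMeasurable
    filter_upwards [ae_restrict_mem hs] with y hy
    obtain ⟨h₁, h₂⟩ := norm_div_norm_sub_mem_Icc (hxs y hy)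
    rw [Real.norm_of_nonneg (Real.rpow_nonneg (by positivity) r)]
    exact Real.rpow_le_two_rpow_abs r h₁ h₂
  refine hbdd.congr_fun (fun y hy => ?_) hs
  have hpos : 0 < ‖x - y‖ := (norm_nonneg _).lt_of_ne' fun h =>
    absurd (norm_div_norm_sub_mem_Icc (hxs y hy)).1 (by norm_num [h])
  dsimp only
  rw [Real.div_rpow (norm_nonneg y) hpos.le]
  field_simp

theorem tail_integrability_general (n : ℕ) (α : ℝ)
    (u : EuclideanSpace ℝ (Fin n) → ℝ) (hupos : ∀ x, 0 < u x)
    (heq : ∀ᵐ x : EuclideanSpace ℝ (Fin n),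
      u x = ∫ y, u y ^ (((n : ℝ) + α) / ((n : ℝ) - α)) * ‖x - y‖ ^ (α - (n : ℝ))) :
    IntegrableOn
      (fun y : EuclideanSpace ℝ (Fin n) =>
        u y ^ (((n : ℝ) + α) / ((n : ℝ) - α)) * ‖y‖ ^ (α - (n : ℝ)))
      {y : EuclideanSpace ℝ (Fin n) | 2 < ‖y‖} := by
  obtain ⟨x, hx, hux⟩ := Measure.exists_mem_of_measure_ne_zero_of_ae
    (measure_ball_pos volume (0 : EuclideanSpace ℝ (Fin n)) one_pos).ne' (ae_restrict_of_ae heq)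
  have hint : Integrable (fun y => u y ^ (((n : ℝ) + α) / ((n : ℝ) - α)) * ‖x - y‖ ^ (α - n)) :=
    .of_integral_ne_zero (hux ▸ (hupos x).ne')
  refine integrableOn_mul_norm_rpow_of_integrable_mul_norm_sub_rpow _
    (isOpen_lt continuous_const continuous_norm).measurableSet (fun y hy => ?_) hint
  linarith [mem_ball_zero_iff.1 hx, show 2 < ‖y‖ from hy]

theorem tail_integrability (n : ℕ) (hn : 1 ≤ n) (α : ℝ) (hα0 : 0 < α) (hαn : α < n)
    (u : EuclideanSpace ℝ (Fin n) → ℝ) (hupos : ∀ x, 0 < u x)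
    (hloc : ∀ R > (0 : ℝ), MemLp u (ENNReal.ofReal (2 * (n : ℝ) / ((n : ℝ) - α)))
      (volume.restrict (ball (0 : EuclideanSpace ℝ (Fin n)) R)))
    (heq : ∀ᵐ x : EuclideanSpace ℝ (Fin n),
      u x = ∫ y, u y ^ (((n : ℝ) + α) / ((n : ℝ) - α)) * ‖x - y‖ ^ (α - (n : ℝ))) :
    IntegrableOn
      (fun y : EuclideanSpace ℝ (Fin n) =>
        u y ^ (((n : ℝ) + α) / ((n : ℝ) - α)) * ‖y‖ ^ (α - (n : ℝ)))
      {y : EuclideanSpace ℝ (Fin n) | 2 < ‖y‖} :=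
  tail_integrability_general n α u hupos heq
end

section
/- Let n ≥ 1, 0 < α < n, 0 < μ, and let u be a positive measurable solution of u(x) = ∫_{ℝⁿ} u(y)^μ |x-y|^{α-n} dy which is not identically +∞. Then u^μ ∈ L¹_{loc}(ℝⁿ), u ∈ L^t_{loc}(ℝⁿ) for every t < n/(n-α), and ∫_{|y|>2} u(y)^μ |y|^{α-n} dy < ∞. -/
/-!
Fix a point `x₀` with `u x₀ < ∞`. Comparing the kernel `|x₀ - y|^(α-n)` with `1` on a ball and
with `|y|^(α-n)` near infinity shows at once that `u^μ` is locally integrable and has a finite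
weighted tail. For `x` in a ball `B_R`, split the integral defining `u x` at a larger ball `B_M`:
the far part is bounded by the tail, uniformly in `x`, and the near part is the potential of the
integrable density `u^μ · 1_{B_M}`. By Hölder's inequality with respect to the measure
`u^μ dy` on `B_M`, its `s`-th power is dominated by the potential of `|·|^((α-n)s)`, which is
locally integrable exactly when `s < n/(n-α)`; Tonelli then gives `u ∈ L^s(B_R)` for
`1 < s < n/(n-α)`, and smaller exponents follow because balls have finite measure.
-/

open MeasureTheory Metric Set
open scoped ENNReal

namespace ENNReal

lemma rpow_le_rpow_of_nonpos {x y : ℝ≥0∞} {z : ℝ} (hz : z ≤ 0) (hxy : x ≤ y) :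
    y ^ z ≤ x ^ z := by
  rw [← neg_neg z, rpow_neg y, rpow_neg x, ← inv_rpow, ← inv_rpow]
  exact rpow_le_rpow (ENNReal.inv_le_inv.mpr hxy) (neg_nonneg.mpr hz)

lemma ofReal_rpow_le_mul_ofReal_rpow {a b d c : ℝ} (ha : 0 < a) (hc : c ≤ 0) (hd : d ≤ a * b) :
    ENNReal.ofReal b ^ c ≤ ENNReal.ofReal a ^ (-c) * ENNReal.ofReal d ^ c := by
  have ha' : ENNReal.ofReal a ≠ 0 := (ofReal_pos.mpr ha).ne'
  calc ENNReal.ofReal b ^ c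
      = ENNReal.ofReal a ^ (-c) * (ENNReal.ofReal a ^ c * ENNReal.ofReal b ^ c) := by
        rw [← mul_assoc, ← rpow_add _ _ ha' ofReal_ne_top, neg_add_cancel, rpow_zero, one_mul]
    _ = ENNReal.ofReal a ^ (-c) * ENNReal.ofReal (a * b) ^ c := by
        rw [ofReal_mul ha.le, mul_rpow_of_ne_top ofReal_ne_top ofReal_ne_top]
    _ ≤ ENNReal.ofReal a ^ (-c) * ENNReal.ofReal d ^ c :=
        mul_le_mul_right (rpow_le_rpow_of_nonpos hc (ofReal_le_ofReal hd)) _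

/-- Hölder's inequality for `f ^ (1 - 1/s)` and `f ^ (1/s) * g`. -/
theorem lintegral_mul_rpow_le {X : Type*} [MeasurableSpace X] {ν : Measure X}
    {f g : X → ℝ≥0∞} (hf : AEMeasurable f ν) (hg : AEMeasurable g ν) {s : ℝ} (hs : 1 < s) :
    (∫⁻ x, f x * g x ∂ν) ^ s ≤ (∫⁻ x, f x ∂ν) ^ (s - 1) * ∫⁻ x, f x * g x ^ s ∂ν := by
  have hs0 : 0 < s := one_pos.trans hs
  have hpq : (s / (s - 1)).HolderConjugate s := (Real.HolderConjugate.conjExponent hs).symm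
  have holder := lintegral_mul_le_Lp_mul_Lq ν hpq (f := fun x ↦ f x ^ ((s - 1) / s))
    (g := fun x ↦ f x ^ (1 / s) * g x) (by fun_prop) (by fun_prop)
  have hfg : ∀ x, f x ^ ((s - 1) / s) * (f x ^ (1 / s) * g x) = f x * g x := fun x ↦ by
    rw [← mul_assoc, ← rpow_add_of_nonneg _ _ (by bound) (by positivity),
      show (s - 1) / s + 1 / s = 1 by field_simp; ring, rpow_one]
  have hF : ∀ x, (f x ^ ((s - 1) / s)) ^ (s / (s - 1)) = f x := fun x ↦ by
    rw [← rpow_mul, show (s - 1) / s * (s / (s - 1)) = 1 by field_simp [(sub_pos.mpr hs).ne'],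
      rpow_one]
  have hG : ∀ x, (f x ^ (1 / s) * g x) ^ s = f x * g x ^ s := fun x ↦ by
    rw [mul_rpow_of_nonneg _ _ hs0.le, ← rpow_mul, one_div_mul_cancel hs0.ne', rpow_one]
  simp only [Pi.mul_apply, hfg, hF, hG] at holder
  calc (∫⁻ x, f x * g x ∂ν) ^ s
      ≤ ((∫⁻ x, f x ∂ν) ^ (1 / (s / (s - 1))) * (∫⁻ x, f x * g x ^ s ∂ν) ^ (1 / s)) ^ s :=
        rpow_le_rpow holder hs0.le
    _ = (∫⁻ x, f x ∂ν) ^ (s - 1) * ∫⁻ x, f x * g x ^ s ∂ν := by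
        rw [mul_rpow_of_nonneg _ _ hs0.le, ← rpow_mul, ← rpow_mul, one_div_mul_cancel hs0.ne',
          rpow_one, show 1 / (s / (s - 1)) * s = s - 1 by field_simp]

end ENNReal

section Measure

variable {X : Type*} [MeasurableSpace X] {ν : Measure X}

lemma setLIntegral_lt_top_of_le_const_mul {S : Set X} (hS : MeasurableSet S) {g h : X → ℝ≥0∞}
    {C : ℝ≥0∞} (hC : C ≠ ⊤) (hh : ∫⁻ y, h y ∂ν ≠ ⊤) (hgh : ∀ y ∈ S, g y ≤ C * h y) :
    ∫⁻ y in S, g y ∂ν < ⊤ :=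
  calc ∫⁻ y in S, g y ∂ν ≤ ∫⁻ y in S, C * h y ∂ν := setLIntegral_mono' hS hgh
    _ = C * ∫⁻ y in S, h y ∂ν := lintegral_const_mul' C h hC
    _ ≤ C * ∫⁻ y, h y ∂ν := mul_le_mul_right (setLIntegral_le_lintegral S h) C
    _ < ⊤ := ENNReal.mul_lt_top hC.lt_top hh.lt_top

lemma lintegral_rpow_lt_top_of_le [IsFiniteMeasure ν] {f : X → ℝ≥0∞} {t s : ℝ} (ht : 0 ≤ t)
    (hts : t ≤ s) (hs : ∫⁻ x, f x ^ s ∂ν < ⊤) : ∫⁻ x, f x ^ t ∂ν < ⊤ :=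
  calc ∫⁻ x, f x ^ t ∂ν ≤ ∫⁻ x, 1 + f x ^ s ∂ν := lintegral_mono fun x ↦ by
        rcases le_total (f x) 1 with h | h
        · exact (ENNReal.rpow_le_one h ht).trans le_self_add
        · exact (ENNReal.rpow_le_rpow_of_exponent_le h hts).trans le_add_self
    _ = ν univ + ∫⁻ x, f x ^ s ∂ν := by rw [lintegral_add_left measurable_const, lintegral_one]
    _ < ⊤ := ENNReal.add_lt_top.mpr ⟨measure_lt_top ν univ, hs⟩

end Measure

section Kernel

variable {E : Type*} [NormedAddCommGroup E] [MeasurableSpace E] [BorelSpace E] {μ : Measure E}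
  {f : E → ℝ≥0∞} {c : ℝ}

lemma setLIntegral_ball_lt_top_of_potential_ne_top (hc : c ≤ 0) {x₀ : E}
    (hfin : ∫⁻ y, f y * ENNReal.ofReal ‖x₀ - y‖ ^ c ∂μ ≠ ⊤) {R : ℝ} (hR : 0 < R) :
    ∫⁻ y in ball 0 R, f y ∂μ < ⊤ := by
  refine setLIntegral_lt_top_of_le_const_mul (C := ENNReal.ofReal (‖x₀‖ + R) ^ (-c))
    measurableSet_ball
    (ENNReal.rpow_ne_top_of_nonneg (neg_nonneg.mpr hc) ENNReal.ofReal_ne_top) hfin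
    fun y hy ↦ ?_
  have hdist : ‖x₀ - y‖ ≤ (‖x₀‖ + R) * 1 := by
    linarith [norm_sub_le x₀ y, mem_ball_zero_iff.mp hy]
  calc f y = f y * ENNReal.ofReal 1 ^ c := by simp
    _ ≤ f y * (ENNReal.ofReal (‖x₀‖ + R) ^ (-c) * ENNReal.ofReal ‖x₀ - y‖ ^ c) :=
        mul_le_mul_right (ENNReal.ofReal_rpow_le_mul_ofReal_rpow (by positivity) hc hdist) _
    _ = _ := by ring

lemma setLIntegral_norm_gt_lt_top_of_potential_ne_top (hc : c ≤ 0) {x₀ : E}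
    (hfin : ∫⁻ y, f y * ENNReal.ofReal ‖x₀ - y‖ ^ c ∂μ ≠ ⊤) :
    ∫⁻ y in {y | 2 < ‖y‖}, f y * ENNReal.ofReal ‖y‖ ^ c ∂μ < ⊤ := by
  refine setLIntegral_lt_top_of_le_const_mul (C := ENNReal.ofReal (‖x₀‖ / 2 + 1) ^ (-c))
    (measurableSet_lt measurable_const measurable_norm)
    (ENNReal.rpow_ne_top_of_nonneg (neg_nonneg.mpr hc) ENNReal.ofReal_ne_top) hfin
    fun y (hy : 2 < ‖y‖) ↦ ?_
  have hdist : ‖x₀ - y‖ ≤ (‖x₀‖ / 2 + 1) * ‖y‖ := by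
    nlinarith [norm_sub_le x₀ y, norm_nonneg x₀]
  calc f y * ENNReal.ofReal ‖y‖ ^ c
      ≤ f y * (ENNReal.ofReal (‖x₀‖ / 2 + 1) ^ (-c) * ENNReal.ofReal ‖x₀ - y‖ ^ c) :=
        mul_le_mul_right (ENNReal.ofReal_rpow_le_mul_ofReal_rpow (by positivity) hc hdist) _
    _ = _ := by ring

lemma setLIntegral_compl_ball_le_tail {x : E} {R M : ℝ} (hx : ‖x‖ < R) (hM : 2 < M)
    (hRM : 2 * R ≤ M) (hc : c ≤ 0) :
    ∫⁻ y in (ball 0 M)ᶜ, f y * ENNReal.ofReal ‖x - y‖ ^ c ∂μ ≤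
      ENNReal.ofReal 2 ^ (-c) * ∫⁻ y in {y | 2 < ‖y‖}, f y * ENNReal.ofReal ‖y‖ ^ c ∂μ := by
  rw [← lintegral_const_mul' _ _
    (ENNReal.rpow_ne_top_of_nonneg (neg_nonneg.mpr hc) ENNReal.ofReal_ne_top)]
  refine (setLIntegral_mono' measurableSet_ball.compl fun y hy ↦ ?_).trans
    (lintegral_mono_set fun y hy ↦ ?_)
  · have hyM : M ≤ ‖y‖ := by simpa using hy
    have hdist : ‖y‖ ≤ 2 * ‖x - y‖ := by
      linarith [norm_sub_norm_le y x, norm_sub_rev x y]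
    calc f y * ENNReal.ofReal ‖x - y‖ ^ c
        ≤ f y * (ENNReal.ofReal 2 ^ (-c) * ENNReal.ofReal ‖y‖ ^ c) :=
          mul_le_mul_right (ENNReal.ofReal_rpow_le_mul_ofReal_rpow two_pos hc hdist) _
      _ = _ := by ring
  · have hyM : M ≤ ‖y‖ := by simpa using hy
    exact hM.trans_le hyM

lemma setLIntegral_ball_ofReal_norm_sub_rpow_le [μ.IsAddRightInvariant] (c : ℝ) {y : E}
    {R M : ℝ} (hy : ‖y‖ < M) :
    ∫⁻ x in ball 0 R, ENNReal.ofReal ‖x - y‖ ^ c ∂μ ≤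
      ∫⁻ z in ball 0 (R + M), ENNReal.ofReal ‖z‖ ^ c ∂μ :=
  calc ∫⁻ x in ball 0 R, ENNReal.ofReal ‖x - y‖ ^ c ∂μ
      ≤ ∫⁻ x in (· - y) ⁻¹' ball 0 (R + M), ENNReal.ofReal ‖x - y‖ ^ c ∂μ :=
        lintegral_mono_set fun x hx ↦ by
          rw [mem_ball_zero_iff] at hx
          rw [mem_preimage, mem_ball_zero_iff]
          linarith [norm_sub_le x y]
    _ = ∫⁻ z in ball 0 (R + M), ENNReal.ofReal ‖z‖ ^ c ∂μ :=
        (measurePreserving_sub_right μ y).setLIntegral_comp_preimage measurableSet_ball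
          (by fun_prop : Measurable fun z : E ↦ ENNReal.ofReal ‖z‖ ^ c)

lemma setLIntegral_ball_setLIntegral_ball_le [SecondCountableTopology E] [SFinite μ]
    [μ.IsAddRightInvariant] (hf : Measurable f) (c R M : ℝ) :
    ∫⁻ x in ball 0 R, ∫⁻ y in ball 0 M, f y * ENNReal.ofReal ‖x - y‖ ^ c ∂μ ∂μ ≤
      (∫⁻ y in ball 0 M, f y ∂μ) * ∫⁻ z in ball 0 (R + M), ENNReal.ofReal ‖z‖ ^ c ∂μ :=
  calc ∫⁻ x in ball 0 R, ∫⁻ y in ball 0 M, f y * ENNReal.ofReal ‖x - y‖ ^ c ∂μ ∂μ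
      = ∫⁻ y in ball 0 M, f y * ∫⁻ x in ball 0 R, ENNReal.ofReal ‖x - y‖ ^ c ∂μ ∂μ := by
        rw [lintegral_lintegral_swap (by fun_prop)]
        exact lintegral_congr fun y ↦ lintegral_const_mul _ (by fun_prop)
    _ ≤ ∫⁻ y in ball 0 M, f y * ∫⁻ z in ball 0 (R + M), ENNReal.ofReal ‖z‖ ^ c ∂μ ∂μ :=
        setLIntegral_mono' measurableSet_ball fun y hy ↦ mul_le_mul_right
          (setLIntegral_ball_ofReal_norm_sub_rpow_le c (mem_ball_zero_iff.mp hy)) _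
    _ = _ := lintegral_mul_const _ hf

end Kernel

section RieszPotential

variable {E : Type*} [NormedAddCommGroup E] [NormedSpace ℝ E] [FiniteDimensional ℝ E]
  [MeasurableSpace E] [BorelSpace E] {μ : Measure E} [μ.IsAddHaarMeasure]

lemma setLIntegral_ball_ofReal_norm_rpow_lt_top (hd : 1 ≤ Module.finrank ℝ E) {c : ℝ}
    (hc : -(Module.finrank ℝ E : ℝ) < c) (r : ℝ) :
    ∫⁻ z in ball 0 r, ENNReal.ofReal ‖z‖ ^ c ∂μ < ⊤ := by
  have : Nontrivial E := Module.nontrivial_of_finrank_pos (R := ℝ) (by omega)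
  have hint : IntegrableOn (fun z : E ↦ ‖z‖ ^ c) (ball 0 r) μ :=
    integrableOn_ball_of_norm_le_rpow (C := 1) (α := -c) hd (by linarith)
      (ae_of_all _ fun z ↦ by simp [abs_of_nonneg (Real.rpow_nonneg (norm_nonneg z) c)])
      (by fun_prop : Measurable fun z : E ↦ ‖z‖ ^ c).aestronglyMeasurable
  -- the two sides differ at `z = 0`, where `(0 : ℝ≥0∞) ^ c = ⊤` but `(0 : ℝ) ^ c = 0`
  have hae : ∀ᵐ z ∂μ.restrict (ball 0 r), ENNReal.ofReal ‖z‖ ^ c = ‖‖z‖ ^ c‖ₑ := by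
    refine ae_restrict_of_ae ?_
    filter_upwards [compl_mem_ae_iff.mpr (measure_singleton (0 : E))] with z hz
    rw [Real.enorm_of_nonneg (Real.rpow_nonneg (norm_nonneg z) c),
      ENNReal.ofReal_rpow_of_pos (norm_pos_iff.mpr hz)]
  rw [lintegral_congr_ae hae]
  exact hint.2

lemma setLIntegral_ball_rpow_potential_lt_top (hd : 1 ≤ Module.finrank ℝ E) {f : E → ℝ≥0∞}
    (hf : Measurable f) {M : ℝ} (hF : ∫⁻ y in ball 0 M, f y ∂μ < ⊤) {c s : ℝ} (hs : 1 < s)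
    (hcs : -(Module.finrank ℝ E : ℝ) < c * s) (R : ℝ) :
    ∫⁻ x in ball 0 R, (∫⁻ y in ball 0 M, f y * ENNReal.ofReal ‖x - y‖ ^ c ∂μ) ^ s ∂μ < ⊤ := by
  set F := ∫⁻ y in ball 0 M, f y ∂μ
  have hFs : F ^ (s - 1) ≠ ⊤ := ENNReal.rpow_ne_top_of_nonneg (by linarith) hF.ne
  calc ∫⁻ x in ball 0 R, (∫⁻ y in ball 0 M, f y * ENNReal.ofReal ‖x - y‖ ^ c ∂μ) ^ s ∂μ
      ≤ ∫⁻ x in ball 0 R,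
          F ^ (s - 1) * ∫⁻ y in ball 0 M, f y * ENNReal.ofReal ‖x - y‖ ^ (c * s) ∂μ ∂μ :=
        lintegral_mono fun x ↦ by
          simpa only [← ENNReal.rpow_mul] using
            ENNReal.lintegral_mul_rpow_le hf.aemeasurable
              (by fun_prop : Measurable fun y ↦ ENNReal.ofReal ‖x - y‖ ^ c).aemeasurable hs
    _ = F ^ (s - 1) *
          ∫⁻ x in ball 0 R, ∫⁻ y in ball 0 M, f y * ENNReal.ofReal ‖x - y‖ ^ (c * s) ∂μ ∂μ :=
        lintegral_const_mul' _ _ hFs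
    _ ≤ F ^ (s - 1) * (F * ∫⁻ z in ball 0 (R + M), ENNReal.ofReal ‖z‖ ^ (c * s) ∂μ) :=
        mul_le_mul_right (setLIntegral_ball_setLIntegral_ball_le hf _ _ _) _
    _ < ⊤ := ENNReal.mul_lt_top hFs.lt_top
        (ENNReal.mul_lt_top hF (setLIntegral_ball_ofReal_norm_rpow_lt_top hd hcs _))

theorem setLIntegral_ball_rpow_lt_top_of_le_potential (hd : 1 ≤ Module.finrank ℝ E)
    {u f : E → ℝ≥0∞} (hf : Measurable f) {c s : ℝ} (hc : c ≤ 0) (hs : 1 < s)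
    (hcs : -(Module.finrank ℝ E : ℝ) < c * s)
    (hu : ∀ x, u x ≤ ∫⁻ y, f y * ENNReal.ofReal ‖x - y‖ ^ c ∂μ)
    (hloc : ∀ M > 0, ∫⁻ y in ball 0 M, f y ∂μ < ⊤)
    (htail : ∫⁻ y in {y | 2 < ‖y‖}, f y * ENNReal.ofReal ‖y‖ ^ c ∂μ < ⊤) (R : ℝ) :
    ∫⁻ x in ball 0 R, u x ^ s ∂μ < ⊤ := by
  set M := max 3 (2 * R)
  set P := fun x ↦ ∫⁻ y in ball 0 M, f y * ENNReal.ofReal ‖x - y‖ ^ c ∂μ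
  set K := ENNReal.ofReal 2 ^ (-c) * ∫⁻ y in {y | 2 < ‖y‖}, f y * ENNReal.ofReal ‖y‖ ^ c ∂μ
  have hK : K ≠ ⊤ := ENNReal.mul_ne_top
    (ENNReal.rpow_ne_top_of_nonneg (neg_nonneg.mpr hc) ENNReal.ofReal_ne_top) htail.ne
  have hsplit : ∀ x ∈ ball (0 : E) R, u x ≤ P x + K := fun x hx ↦ by
    refine (hu x).trans ?_
    rw [← lintegral_add_compl _ measurableSet_ball]
    exact add_le_add le_rfl (setLIntegral_compl_ball_le_tail (mem_ball_zero_iff.mp hx)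
      (by linarith [le_max_left 3 (2 * R)]) (le_max_right _ _) hc)
  have h2 : (2 : ℝ≥0∞) ^ (s - 1) ≠ ⊤ := ENNReal.rpow_ne_top_of_nonneg (by linarith) (by simp)
  calc ∫⁻ x in ball 0 R, u x ^ s ∂μ
      ≤ ∫⁻ x in ball 0 R, 2 ^ (s - 1) * (P x ^ s + K ^ s) ∂μ :=
        setLIntegral_mono' measurableSet_ball fun x hx ↦
          (ENNReal.rpow_le_rpow (hsplit x hx) (by linarith)).trans
            (ENNReal.rpow_add_le_mul_rpow_add_rpow _ _ hs.le)
    _ = 2 ^ (s - 1) * (∫⁻ x in ball 0 R, P x ^ s ∂μ + K ^ s * μ (ball 0 R)) := by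
        rw [lintegral_const_mul' _ _ h2, lintegral_add_right _ measurable_const,
          setLIntegral_const]
    _ < ⊤ := ENNReal.mul_lt_top h2.lt_top <| ENNReal.add_lt_top.mpr
        ⟨setLIntegral_ball_rpow_potential_lt_top hd hf (hloc M (by positivity)) hs hcs R,
          ENNReal.mul_lt_top (ENNReal.rpow_lt_top_of_nonneg (by linarith) hK) measure_ball_lt_top⟩

end RieszPotential

theorem local_integrability_of_solution_general (n : ℕ) (α μ : ℝ) (hα0 : 0 < α)
    (hαn : α < n)
    (u : EuclideanSpace ℝ (Fin n) → ℝ≥0∞) (hu : Measurable u)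
    (heq : ∀ x, u x = ∫⁻ y, u y ^ μ * (ENNReal.ofReal ‖x - y‖) ^ (α - (n : ℝ)))
    (hne : ¬ ∀ x, u x = ⊤) :
    (∀ R > (0 : ℝ), (∫⁻ y in ball (0 : EuclideanSpace ℝ (Fin n)) R, u y ^ μ) < ⊤) ∧
    (∀ t : ℝ, 0 < t → t < (n : ℝ) / ((n : ℝ) - α) →
      ∀ R > (0 : ℝ), (∫⁻ y in ball (0 : EuclideanSpace ℝ (Fin n)) R, u y ^ t) < ⊤) ∧
    (∫⁻ y in {y : EuclideanSpace ℝ (Fin n) | 2 < ‖y‖},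
        u y ^ μ * (ENNReal.ofReal ‖y‖) ^ (α - (n : ℝ))) < ⊤ := by
  obtain ⟨x₀, hx₀⟩ := not_forall.mp hne
  have hc : α - n ≤ 0 := by linarith
  have hfin : ∫⁻ y, u y ^ μ * ENNReal.ofReal ‖x₀ - y‖ ^ (α - n) ≠ ⊤ := heq x₀ ▸ hx₀
  have hloc := fun R (hR : 0 < R) ↦ setLIntegral_ball_lt_top_of_potential_ne_top hc hfin hR
  have htail := setLIntegral_norm_gt_lt_top_of_potential_ne_top hc hfin
  refine ⟨hloc, fun t ht htn R _ ↦ ?_, htail⟩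
  have hnα : 0 < (n : ℝ) - α := by linarith
  have hd : 1 ≤ Module.finrank ℝ (EuclideanSpace ℝ (Fin n)) := by
    rw [finrank_euclideanSpace_fin]
    exact_mod_cast hα0.trans hαn
  obtain ⟨s, hs, hsn⟩ := exists_between (max_lt ((one_lt_div hnα).mpr (by linarith)) htn)
  have hcs : -(Module.finrank ℝ (EuclideanSpace ℝ (Fin n)) : ℝ) < (α - n) * s := by
    rw [finrank_euclideanSpace_fin]
    nlinarith [(lt_div_iff₀ hnα).mp hsn]
  have : IsFiniteMeasure (volume.restrict (ball (0 : EuclideanSpace ℝ (Fin n)) R)) :=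
    isFiniteMeasure_restrict.mpr measure_ball_lt_top.ne
  exact lintegral_rpow_lt_top_of_le ht.le ((le_max_right _ _).trans hs.le) <|
    setLIntegral_ball_rpow_lt_top_of_le_potential hd (by fun_prop)
      hc ((le_max_left _ _).trans_lt hs) hcs (fun x ↦ (heq x).le) hloc htail R

theorem local_integrability_of_solution (n : ℕ) (hn : 1 ≤ n) (α μ : ℝ) (hα0 : 0 < α)
    (hαn : α < n) (hμ : 0 < μ)
    (u : EuclideanSpace ℝ (Fin n) → ℝ≥0∞) (hu : Measurable u) (hupos : ∀ x, 0 < u x)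
    (heq : ∀ x, u x = ∫⁻ y, u y ^ μ * (ENNReal.ofReal ‖x - y‖) ^ (α - (n : ℝ)))
    (hne : ¬ ∀ x, u x = ⊤) :
    (∀ R > (0 : ℝ), (∫⁻ y in ball (0 : EuclideanSpace ℝ (Fin n)) R, u y ^ μ) < ⊤) ∧
    (∀ t : ℝ, 0 < t → t < (n : ℝ) / ((n : ℝ) - α) →
      ∀ R > (0 : ℝ), (∫⁻ y in ball (0 : EuclideanSpace ℝ (Fin n)) R, u y ^ t) < ⊤) ∧
    (∫⁻ y in {y : EuclideanSpace ℝ (Fin n) | 2 < ‖y‖},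
        u y ^ μ * (ENNReal.ofReal ‖y‖) ^ (α - (n : ℝ))) < ⊤ :=
  local_integrability_of_solution_general n α μ hα0 hαn u hu heq hne
end
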